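/- arXiv:1103.5415 — 10 statements merged into one kernel-verified Lean document; each statement's English description precedes it below -/
import Mathlib

section
/- Let K be a field, n ≥ 1, and let F_0,…,F_n be finite-dimensional K-vector spaces with dim F_i = f_i. Let Compl(f) be the set of tuples (d_1,…,d_n) of linear maps d_i : F_i → F_{i−1} with d_i ∘ d_{i+1} = 0 for 1 ≤ i ≤ n−1. Then: (i) Compl(f) is the union, over all f-maximal rank sequences r, of the sets C(f,r) = {(d_1,…,d_n) ∈ Compl(f) : rank d_i ≤ r_i for all i}; and (ii) for any two distinct f-maximal rank sequences r ≠ r′, the set C(f,r) is not contained in C(f,r′). -/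
/-!
A complex has an admissible rank sequence: `d_i ∘ d_{i+1} = 0` puts `range d_{i+1}` inside
`ker d_i`, so `rank d_i + rank d_{i+1} ≤ f_i` by rank–nullity. There are only finitely many
admissible sequences, so this one lies below a maximal one. Conversely, every admissible `r` is
the rank sequence of a complex: in coordinates, let `d_i` copy the last `r_i` coordinates of
`F_i` onto the first `r_i` coordinates of `F_{i-1}`; `r_i + r_{i+1} ≤ f_i` makes the image of
`d_{i+1}` miss the coordinates read by `d_i`. For maximal `r ≠ r'`, maximality of `r` gives an
`i` with `r'_i < r_i`, and the complex realising `r` lies in `C(f, r)` but not in `C(f, r')`.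
-/

section
variable {K : Type*} [Field K] {F : ℕ → Type*} [∀ i, AddCommGroup (F i)]
  [∀ i, Module K (F i)]

/-- `D` (with `D j : F (j+1) → F j` playing the role of `d_{j+1}`) is a complex:
`d_i ∘ d_{i+1} = 0` for `1 ≤ i ≤ n - 1`. -/
def IsComplexSeq (n : ℕ) (D : ∀ i : ℕ, F (i + 1) →ₗ[K] F i) : Prop :=
  ∀ j : ℕ, j + 2 ≤ n → (D j).comp (D (j + 1)) = 0

end

/-- `(r 1, …, r n)` is an admissible rank sequence for `f`: with the conventions
`r 0 = r (n+1) = 0` (entries outside `1,…,n` vanish), `r i + r (i+1) ≤ f i` for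
all `0 ≤ i ≤ n`. -/
def AdmissibleRanks (n : ℕ) (f r : ℕ → ℕ) : Prop :=
  r 0 = 0 ∧ (∀ i, n < i → r i = 0) ∧ ∀ i ≤ n, r i + r (i + 1) ≤ f i

/-- An admissible rank sequence is `f`-maximal if no componentwise larger admissible
rank sequence exists. -/
def MaximalRanks (n : ℕ) (f r : ℕ → ℕ) : Prop :=
  AdmissibleRanks n f r ∧
    ∀ r' : ℕ → ℕ, AdmissibleRanks n f r' → (∀ i, r i ≤ r' i) → ∀ i, r' i = r i

open Module Function

section LinearAlgebra

variable {K V W U : Type*} [Field K] [AddCommGroup V] [Module K V] [AddCommGroup W] [Module K W]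
  [AddCommGroup U] [Module K U]

theorem LinearMap.finrank_range_add_finrank_range_le_of_comp_eq_zero [FiniteDimensional K V]
    {g : V →ₗ[K] W} {h : U →ₗ[K] V} (hgh : g.comp h = 0) :
    finrank K (range g) + finrank K (range h) ≤ finrank K V := by
  have hrange : finrank K (range h) ≤ finrank K (ker g) :=
    Submodule.finrank_mono (LinearMap.range_le_ker_iff.2 hgh)
  have := g.finrank_range_add_finrank_ker
  omega

theorem LinearEquiv.finrank_range_arrowCongr {V' W' : Type*} [AddCommGroup V'] [Module K V']
    [AddCommGroup W'] [Module K W'] (e₁ : V ≃ₗ[K] V') (e₂ : W ≃ₗ[K] W') (g : V →ₗ[K] W) :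
    finrank K (LinearMap.range (e₁.arrowCongr e₂ g)) = finrank K (LinearMap.range g) := by
  have : e₁.arrowCongr e₂ g = (e₂ : W →ₗ[K] W') ∘ₗ g ∘ₗ (e₁.symm : V' →ₗ[K] V) := rfl
  rw [this, LinearMap.range_comp, LinearMap.range_comp, e₁.symm.range, Submodule.map_top,
    e₂.finrank_map_eq]

end LinearAlgebra

section CopyCoords

variable (K : Type*) [Field K] {ρ ι κ : Type*}

noncomputable def copyCoords (i : ρ → ι) (o : ρ → κ) : (ι → K) →ₗ[K] κ → K :=
  ExtendByZero.linearMap K o ∘ₗ LinearMap.funLeft K K i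

variable {K}

theorem finrank_range_copyCoords [Fintype ρ] {i : ρ → ι} {o : ρ → κ} (hi : Injective i)
    (ho : Injective o) : finrank K (LinearMap.range (copyCoords K i o)) = Fintype.card ρ := by
  rw [copyCoords, LinearMap.range_comp,
    LinearMap.range_eq_top.2 (LinearMap.funLeft_surjective_of_injective K K i hi),
    Submodule.map_top, LinearMap.finrank_range_of_inj (extend_injective ho (0 : κ → K)),
    finrank_fintype_fun_eq_card]

theorem copyCoords_comp_eq_zero {ρ' κ' : Type*} {i : ρ → ι} {o : ρ → κ} {i' : ρ' → κ}
    {o' : ρ' → κ'} (hdisj : ∀ a b, o a ≠ i' b) :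
    copyCoords K i' o' ∘ₗ copyCoords K i o = 0 := by
  ext x : 1
  suffices LinearMap.funLeft K K i' (copyCoords K i o x) = 0 by
    change ExtendByZero.linearMap K o' (LinearMap.funLeft K K i' (copyCoords K i o x)) = 0
    rw [this, map_zero]
  funext b
  exact extend_apply' _ _ _ fun ⟨a, ha⟩ => hdisj a b ha

end CopyCoords

section RankSequences

variable {n : ℕ} {f r : ℕ → ℕ}

theorem AdmissibleRanks.le (hr : AdmissibleRanks n f r) {i : ℕ} (hi : i ≤ n) : r i ≤ f i :=
  (Nat.le_add_right _ _).trans (hr.2.2 i hi)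

theorem AdmissibleRanks.succ_le (hr : AdmissibleRanks n f r) {i : ℕ} (hi : i ≤ n) :
    r (i + 1) ≤ f i :=
  (Nat.le_add_left _ _).trans (hr.2.2 i hi)

theorem setOf_admissibleRanks_finite (n : ℕ) (f : ℕ → ℕ) :
    {r | AdmissibleRanks n f r}.Finite := by
  let restrict : (ℕ → ℕ) → Fin (n + 1) → ℕ := fun r i => r i
  refine Set.Finite.of_finite_image (f := restrict) ?_ ?_
  · refine (Set.Finite.pi (t := fun i : Fin (n + 1) => Set.Iic (f i))
      fun i => Set.finite_Iic (f i)).subset ?_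
    rintro _ ⟨r, hr, rfl⟩ i -
    exact hr.le (Nat.lt_succ_iff.1 i.isLt)
  · intro r hr r' hr' h
    funext i
    by_cases hi : i ≤ n
    · exact congrFun h ⟨i, Nat.lt_succ_of_le hi⟩
    · rw [hr.2.1 i (by omega), hr'.2.1 i (by omega)]

theorem maximalRanks_of_maximal (h : Maximal (AdmissibleRanks n f) r) : MaximalRanks n f r :=
  ⟨h.1, fun _ hr' hle i => le_antisymm (h.2 hr' hle i) (hle i)⟩

theorem AdmissibleRanks.exists_maximalRanks_le (hr : AdmissibleRanks n f r) :
    ∃ r', r ≤ r' ∧ MaximalRanks n f r' := by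
  obtain ⟨r', hle, hmax⟩ := (setOf_admissibleRanks_finite n f).exists_le_maximal hr
  exact ⟨r', hle, maximalRanks_of_maximal hmax⟩

theorem MaximalRanks.exists_lt_of_ne {r' : ℕ → ℕ} (hr : MaximalRanks n f r)
    (hr' : AdmissibleRanks n f r') (hne : r ≠ r') : ∃ j < n, r' (j + 1) < r (j + 1) := by
  obtain ⟨i, hi⟩ : ∃ i, r' i < r i := by
    by_contra! h
    exact hne (funext fun i => hr.2 r' hr' h i).symm
  obtain _ | j := i
  · simp [hr.1.1] at hi
  · refine ⟨j, ?_, hi⟩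
    by_contra! hj
    simp [hr.1.2.1 (j + 1) (by omega)] at hi

end RankSequences

section Complexes

variable {K : Type*} [Field K] {F : ℕ → Type*} [∀ i, AddCommGroup (F i)] [∀ i, Module K (F i)]
  [∀ i, FiniteDimensional K (F i)] {n : ℕ} {f : ℕ → ℕ}

noncomputable def rankSeq (n : ℕ) (D : ∀ i : ℕ, F (i + 1) →ₗ[K] F i) : ℕ → ℕ
  | 0 => 0
  | j + 1 => if j < n then finrank K (LinearMap.range (D j)) else 0

theorem admissibleRanks_rankSeq (hf : ∀ i ≤ n, finrank K (F i) = f i)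
    {D : ∀ i : ℕ, F (i + 1) →ₗ[K] F i} (hD : IsComplexSeq n D) :
    AdmissibleRanks n f (rankSeq n D) := by
  refine ⟨rfl, fun i hi => ?_, fun i hi => ?_⟩
  · obtain _ | j := i
    · omega
    · simp [rankSeq, show ¬ j < n by omega]
  obtain _ | j := i
  · rw [← hf 0 hi]
    by_cases h : 0 < n
    · simpa [rankSeq, h] using Submodule.finrank_le (LinearMap.range (D 0))
    · simp [rankSeq, h]
  · rw [← hf (j + 1) hi]
    by_cases h : j + 1 < n
    · simpa [rankSeq, h, show j < n by omega] using
        LinearMap.finrank_range_add_finrank_range_le_of_comp_eq_zero (hD j h)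
    · simpa [rankSeq, h, show j < n by omega] using (D j).finrank_range_le

theorem AdmissibleRanks.exists_isComplexSeq_finrank_range_eq {r : ℕ → ℕ}
    (hr : AdmissibleRanks n f r) (hf : ∀ i ≤ n, finrank K (F i) = f i) :
    ∃ D : ∀ i : ℕ, F (i + 1) →ₗ[K] F i,
      IsComplexSeq n D ∧ ∀ j < n, finrank K (LinearMap.range (D j)) = r (j + 1) := by
  have hsrc : ∀ j, r (j + 1) ≤ finrank K (F (j + 1)) := by
    intro j
    by_cases hj : j + 1 ≤ n
    · exact hf _ hj ▸ hr.le hj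
    · simp [hr.2.1 (j + 1) (by omega)]
  have htgt : ∀ j, r (j + 1) ≤ finrank K (F j) := by
    intro j
    by_cases hj : j + 1 ≤ n
    · exact hf j (by omega) ▸ hr.succ_le (by omega)
    · simp [hr.2.1 (j + 1) (by omega)]
  let e : ∀ i, F i ≃ₗ[K] Fin (finrank K (F i)) → K := fun i => (finBasis K (F i)).equivFun
  -- `d_{j+1}` copies the last `r (j+1)` coordinates of `F (j+1)` to the first ones of `F j`
  let D : ∀ j, F (j + 1) →ₗ[K] F j := fun j =>
    (e (j + 1)).symm.arrowCongr (e j).symm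
      (copyCoords K (Fin.rev ∘ Fin.castLE (hsrc j)) (Fin.castLE (htgt j)))
  refine ⟨D, fun j hj => ?_, fun j _ => ?_⟩
  · rw [← LinearEquiv.arrowCongr_comp, copyCoords_comp_eq_zero, map_zero]
    intro a b hab
    rw [Fin.ext_iff] at hab
    simp only [comp_apply, Fin.val_castLE, Fin.val_rev] at hab
    have hadm := hr.2.2 (j + 1) (by omega)
    have hdim := hf (j + 1) (by omega)
    omega
  · rw [LinearEquiv.finrank_range_arrowCongr,
      finrank_range_copyCoords (Fin.rev_injective.comp (Fin.castLE_injective _))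
        (Fin.castLE_injective _), Fintype.card_fin]

end Complexes

theorem stmt0_general (K : Type*) [Field K] (n : ℕ)
    (F : ℕ → Type*) [∀ i, AddCommGroup (F i)] [∀ i, Module K (F i)]
    [∀ i, FiniteDimensional K (F i)]
    (f : ℕ → ℕ) (hf : ∀ i ≤ n, Module.finrank K (F i) = f i) :
    ({D : ∀ i : ℕ, F (i + 1) →ₗ[K] F i | IsComplexSeq n D} =
      ⋃ r ∈ {r : ℕ → ℕ | MaximalRanks n f r},
        {D : ∀ i : ℕ, F (i + 1) →ₗ[K] F i | IsComplexSeq n D ∧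
          ∀ j < n, Module.finrank K (LinearMap.range (D j)) ≤ r (j + 1)}) ∧
    ∀ r r' : ℕ → ℕ, MaximalRanks n f r → MaximalRanks n f r' → r ≠ r' →
      ¬ ({D : ∀ i : ℕ, F (i + 1) →ₗ[K] F i | IsComplexSeq n D ∧
            ∀ j < n, Module.finrank K (LinearMap.range (D j)) ≤ r (j + 1)} ⊆
          {D : ∀ i : ℕ, F (i + 1) →ₗ[K] F i | IsComplexSeq n D ∧
            ∀ j < n, Module.finrank K (LinearMap.range (D j)) ≤ r' (j + 1)}) := by
  refine ⟨Set.Subset.antisymm (fun D hD => ?_) (Set.iUnion₂_subset fun _ _ _ hD => hD.1),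
    fun r r' hr hr' hne hsub => ?_⟩
  · obtain ⟨r, hle, hr⟩ := (admissibleRanks_rankSeq hf hD).exists_maximalRanks_le
    refine Set.mem_biUnion hr ⟨hD, fun j hj => ?_⟩
    simpa [rankSeq, hj] using hle (j + 1)
  · obtain ⟨j, hj, hlt⟩ := hr.exists_lt_of_ne hr'.1 hne
    obtain ⟨D, hD, hrank⟩ := hr.1.exists_isComplexSeq_finrank_range_eq hf
    have hle := (hsub ⟨hD, fun k hk => (hrank k hk).le⟩).2 j hj
    rw [hrank j hj] at hle
    exact absurd hlt (not_lt.2 hle)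

/-- The variety of complexes is the union, over all `f`-maximal rank sequences `r`,
of the loci `C(f, r)` of complexes with `rank d_i ≤ r i`; and for distinct maximal
rank sequences `r ≠ r'`, `C(f, r)` is not contained in `C(f, r')`. -/
theorem stmt0 (K : Type*) [Field K] (n : ℕ) (hn : 1 ≤ n)
    (F : ℕ → Type*) [∀ i, AddCommGroup (F i)] [∀ i, Module K (F i)]
    [∀ i, FiniteDimensional K (F i)]
    (f : ℕ → ℕ) (hf : ∀ i ≤ n, Module.finrank K (F i) = f i) :
    ({D : ∀ i : ℕ, F (i + 1) →ₗ[K] F i | IsComplexSeq n D} =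
      ⋃ r ∈ {r : ℕ → ℕ | MaximalRanks n f r},
        {D : ∀ i : ℕ, F (i + 1) →ₗ[K] F i | IsComplexSeq n D ∧
          ∀ j < n, Module.finrank K (LinearMap.range (D j)) ≤ r (j + 1)}) ∧
    ∀ r r' : ℕ → ℕ, MaximalRanks n f r → MaximalRanks n f r' → r ≠ r' →
      ¬ ({D : ∀ i : ℕ, F (i + 1) →ₗ[K] F i | IsComplexSeq n D ∧
            ∀ j < n, Module.finrank K (LinearMap.range (D j)) ≤ r (j + 1)} ⊆
          {D : ∀ i : ℕ, F (i + 1) →ₗ[K] F i | IsComplexSeq n D ∧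
            ∀ j < n, Module.finrank K (LinearMap.range (D j)) ≤ r' (j + 1)}) :=
  stmt0_general K n F f hf
end

section
/- Let K be a field, n ≥ 1, and let F_0,…,F_n be finite-dimensional K-vector spaces with dim F_i = f_i. For every admissible rank sequence (r_1,…,r_n) for f (i.e. r_i + r_{i+1} ≤ f_i for all 0 ≤ i ≤ n with r_0 = r_{n+1} = 0), there exists a tuple (d_1,…,d_n) of linear maps d_i : F_i → F_{i−1} with d_i ∘ d_{i+1} = 0 for 1 ≤ i ≤ n−1 and rank d_i = r_i exactly, for all 1 ≤ i ≤ n. -/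
/-!
Pick subspaces `B i ≤ F i` with `dim B i = r (i+1)`, to serve as the image of `d_{i+1}`.
Admissibility `r (i+1) + r (i+2) ≤ f (i+1)` says exactly that `F (i+1) ⧸ B (i+1)` is big enough
to surject onto `B i`, so `d_{i+1}` can be taken with image `B i` and kernel containing
`B (i+1) = image d_{i+2}`; consecutive maps then compose to zero.
-/

section
variable {K V W : Type*} [Field K] [AddCommGroup V] [Module K V] [AddCommGroup W] [Module K W]

theorem Submodule.exists_finrank_eq [FiniteDimensional K V] {k : ℕ}
    (hk : k ≤ Module.finrank K V) : ∃ S : Submodule K V, Module.finrank K S = k := by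
  obtain ⟨ι, hι⟩ := finrank_le_iff_exists_linearMap.mp
    (show Module.finrank K (Fin k → K) ≤ Module.finrank K V by simpa using hk)
  exact ⟨LinearMap.range ι, by simp [LinearMap.finrank_range_of_inj hι]⟩

theorem LinearMap.exists_range_eq_of_le_ker [FiniteDimensional K V]
    (U : Submodule K V) (T : Submodule K W) [FiniteDimensional K T]
    (h : Module.finrank K T + Module.finrank K U ≤ Module.finrank K V) :
    ∃ g : V →ₗ[K] W, LinearMap.range g = T ∧ U ≤ LinearMap.ker g := by
  have hT : Module.finrank K T ≤ Module.finrank K (V ⧸ U) := by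
    rw [Submodule.finrank_quotient]; omega
  obtain ⟨ι, hι⟩ := finrank_le_iff_exists_linearMap.mp hT
  obtain ⟨p, hpι⟩ := ι.exists_leftInverse_of_injective (LinearMap.ker_eq_bot.mpr hι)
  have hp : Function.Surjective (p ∘ₗ U.mkQ) := by
    rw [LinearMap.coe_comp]
    exact Function.Surjective.comp (fun t => ⟨ι t, LinearMap.congr_fun hpι t⟩) U.mkQ_surjective
  refine ⟨T.subtype ∘ₗ p ∘ₗ U.mkQ, ?_, ?_⟩
  · rw [LinearMap.range_comp_of_range_eq_top _ (LinearMap.range_eq_top.mpr hp),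
      Submodule.range_subtype]
  · intro u hu
    simp [(Submodule.Quotient.mk_eq_zero U).mpr hu]

end

theorem AdmissibleRanks.add_succ_le {n : ℕ} {f g r : ℕ → ℕ} (hr : AdmissibleRanks n f r)
    (hfg : ∀ i ≤ n, f i ≤ g i) (i : ℕ) : r i + r (i + 1) ≤ g i := by
  obtain ⟨-, hzero, hle⟩ := hr
  rcases le_or_gt i n with hi | hi
  · exact (hle i hi).trans (hfg i hi)
  · simp [hzero i hi, hzero (i + 1) (by omega)]

theorem stmt1_general (K : Type*) [Field K] (n : ℕ)
    (F : ℕ → Type*) [∀ i, AddCommGroup (F i)] [∀ i, Module K (F i)]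
    [∀ i, FiniteDimensional K (F i)]
    (f : ℕ → ℕ) (hf : ∀ i ≤ n, Module.finrank K (F i) = f i)
    (r : ℕ → ℕ) (hr : AdmissibleRanks n f r) :
    ∃ D : ∀ i : ℕ, F (i + 1) →ₗ[K] F i, IsComplexSeq n D ∧
      ∀ j < n, Module.finrank K (LinearMap.range (D j)) = r (j + 1) := by
  have hadm := hr.add_succ_le (g := fun i => Module.finrank K (F i)) fun i hi => (hf i hi).ge
  choose B hB using fun i => Submodule.exists_finrank_eq (le_of_add_le_right (hadm i))
  choose D hrange hker using fun i => LinearMap.exists_range_eq_of_le_ker (B (i + 1)) (B i)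
    (by rw [hB, hB]; exact hadm (i + 1))
  refine ⟨D, fun j _ => ?_, fun j _ => by rw [hrange, hB]⟩
  rw [← LinearMap.range_le_ker_iff, hrange]
  exact hker j

/-- For every admissible rank sequence `r` for `f` there is a complex
`(d_1, …, d_n)` with `rank d_i = r i` exactly, for all `1 ≤ i ≤ n`. -/
theorem stmt1 (K : Type*) [Field K] (n : ℕ) (hn : 1 ≤ n)
    (F : ℕ → Type*) [∀ i, AddCommGroup (F i)] [∀ i, Module K (F i)]
    [∀ i, FiniteDimensional K (F i)]
    (f : ℕ → ℕ) (hf : ∀ i ≤ n, Module.finrank K (F i) = f i)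
    (r : ℕ → ℕ) (hr : AdmissibleRanks n f r) :
    ∃ D : ∀ i : ℕ, F (i + 1) →ₗ[K] F i, IsComplexSeq n D ∧
      ∀ j < n, Module.finrank K (LinearMap.range (D j)) = r (j + 1) :=
  stmt1_general K n F f hf r hr
end

section
/- (a) If r_i + r_{i+1} ≤ β_i and s_i + s_{i+1} ≤ β_i for all 0 ≤ i ≤ n (conventions r_0 = r_{n+1} = s_0 = s_{n+1} = 0), then every vertex of the up-and-down graph Γ(β;r,s) is incident to at most one red edge and at most one blue edge. (b) If moreover β = [m_n,…,m_1] is a band dimension vector (β_i = m_i + m_{i+1} with m_0 = m_{n+1} = 0) and r = s = (m_1,…,m_n), then every vertex of Γ([m_n,…,m_1]) is incident to exactly one red edge and exactly one blue edge. -/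
/-- Vertices `e^(i)_j` of the up-and-down graph: pairs `(i, j)` with `0 ≤ i ≤ n`
and `1 ≤ j ≤ β i`. -/
def UDVert (n : ℕ) (β : ℕ → ℕ) : Type :=
  {p : ℕ × ℕ // p.1 ≤ n ∧ 1 ≤ p.2 ∧ p.2 ≤ β p.1}

/-- The red edges of the up-and-down graph `Γ(β; r, s)`: for `1 ≤ i ≤ n`, if `n - i`
is even they join `e^(i)_j` to `e^(i-1)_j` for `1 ≤ j ≤ r i`, and if `n - i` is odd
they join `e^(i)_{β i + 1 - j}` to `e^(i-1)_{β (i-1) + 1 - j}` for `1 ≤ j ≤ r i`. -/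
def RedAdj (n : ℕ) (β r : ℕ → ℕ) (p q : ℕ × ℕ) : Prop :=
  ∃ i j : ℕ, 1 ≤ i ∧ i ≤ n ∧ 1 ≤ j ∧ j ≤ r i ∧
    ((Even (n - i) ∧
        ((p = (i, j) ∧ q = (i - 1, j)) ∨ (q = (i, j) ∧ p = (i - 1, j)))) ∨
      (¬ Even (n - i) ∧
        ((p = (i, β i + 1 - j) ∧ q = (i - 1, β (i - 1) + 1 - j)) ∨
          (q = (i, β i + 1 - j) ∧ p = (i - 1, β (i - 1) + 1 - j)))))

/-- The blue edges of the up-and-down graph `Γ(β; r, s)`: for `1 ≤ i ≤ n`, if `n - i`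
is even they join `e^(i)_{β i + 1 - j}` to `e^(i-1)_{β (i-1) + 1 - j}` for `1 ≤ j ≤ s i`,
and if `n - i` is odd they join `e^(i)_j` to `e^(i-1)_j` for `1 ≤ j ≤ s i`. -/
def BlueAdj (n : ℕ) (β s : ℕ → ℕ) (p q : ℕ × ℕ) : Prop :=
  ∃ i j : ℕ, 1 ≤ i ∧ i ≤ n ∧ 1 ≤ j ∧ j ≤ s i ∧
    ((¬ Even (n - i) ∧
        ((p = (i, j) ∧ q = (i - 1, j)) ∨ (q = (i, j) ∧ p = (i - 1, j)))) ∨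
      (Even (n - i) ∧
        ((p = (i, β i + 1 - j) ∧ q = (i - 1, β (i - 1) + 1 - j)) ∨
          (q = (i, β i + 1 - j) ∧ p = (i - 1, β (i - 1) + 1 - j)))))

/-- The up-and-down graph `Γ(β; r, s)` (edges of both colors). -/
def UDGraph (n : ℕ) (β r s : ℕ → ℕ) : SimpleGraph (UDVert n β) where
  Adj x y := x ≠ y ∧ (RedAdj n β r x.1 y.1 ∨ BlueAdj n β s x.1 y.1)
  symm := by
    constructor
    rintro x y ⟨hxy, h⟩
    refine ⟨hxy.symm, ?_⟩
    rcases h with ⟨i, j, h1, h2, h3, h4, h5⟩ | ⟨i, j, h1, h2, h3, h4, h5⟩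
    · exact Or.inl ⟨i, j, h1, h2, h3, h4, by tauto⟩
    · exact Or.inr ⟨i, j, h1, h2, h3, h4, by tauto⟩
  loopless := by constructor; rintro x ⟨h, -⟩; exact h rfl

/-- The sequence `m` extended by the conventions `m 0 = m (n+1) = 0` (entries outside
`1,…,n` are set to `0`). -/
def bandM (n : ℕ) (m : ℕ → ℕ) : ℕ → ℕ := fun i => if 1 ≤ i ∧ i ≤ n then m i else 0

/-- The band dimension vector `[m_n, …, m_1]`, i.e. `β i = m i + m (i+1)` with the
conventions `m 0 = m (n+1) = 0`. -/
def bandBeta (n : ℕ) (m : ℕ → ℕ) : ℕ → ℕ := fun i => bandM n m i + bandM n m (i + 1)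

/-- The up-and-down graph `Γ([m_n, …, m_1])` of a band dimension vector:
`r = s = (m_1, …, m_n)`. -/
def bandGraph (n : ℕ) (m : ℕ → ℕ) : SimpleGraph (UDVert n (bandBeta n m)) :=
  UDGraph n (bandBeta n m) (bandM n m) (bandM n m)

/-- `N([m_n, …, m_1])`: the number of connected components of `Γ([m_n, …, m_1])`. -/
noncomputable def NBand (n : ℕ) (m : ℕ → ℕ) : ℕ :=
  Nat.card (bandGraph n m).ConnectedComponent

/-!
Both colours are instances of one construction: between layers `i - 1` and `i` the first
`r i` vertices are matched bottom-aligned (index `j` to `j`) or top-aligned (the `j`-th from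
the top to the `j`-th from the top), and the alignment alternates with `i`. A vertex
`e^(a)_b` can therefore only be matched downwards within the `r a` vertices at one end of its
layer, and upwards within the `r (a + 1)` vertices at the other end; the condition
`r a + r (a + 1) ≤ β a` makes these two ranges disjoint. For a band dimension vector they
cover the layer exactly, which gives existence.
-/

/-- Edges of one colour of an up-and-down graph; `P i` holds when the edges between layers
`i - 1` and `i` are bottom-aligned. -/
def UDColorAdj (n : ℕ) (β r : ℕ → ℕ) (P : ℕ → Prop) (p q : ℕ × ℕ) : Prop :=
  ∃ i j : ℕ, 1 ≤ i ∧ i ≤ n ∧ 1 ≤ j ∧ j ≤ r i ∧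
    ((P i ∧
        ((p = (i, j) ∧ q = (i - 1, j)) ∨ (q = (i, j) ∧ p = (i - 1, j)))) ∨
      (¬ P i ∧
        ((p = (i, β i + 1 - j) ∧ q = (i - 1, β (i - 1) + 1 - j)) ∨
          (q = (i, β i + 1 - j) ∧ p = (i - 1, β (i - 1) + 1 - j)))))

theorem redAdj_iff_udColorAdj (n : ℕ) (β r : ℕ → ℕ) (p q : ℕ × ℕ) :
    RedAdj n β r p q ↔ UDColorAdj n β r (fun i => Even (n - i)) p q :=
  Iff.rfl

theorem blueAdj_iff_udColorAdj (n : ℕ) (β s : ℕ → ℕ) (p q : ℕ × ℕ) :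
    BlueAdj n β s p q ↔ UDColorAdj n β s (fun i => ¬ Even (n - i)) p q := by
  constructor <;> rintro ⟨i, j, h1, h2, h3, h4, h5⟩ <;>
    exact ⟨i, j, h1, h2, h3, h4, by tauto⟩

theorem even_sub_iff_not_even_sub_succ {n a : ℕ} (ha : a + 1 ≤ n) :
    Even (n - a) ↔ ¬ Even (n - (a + 1)) := by
  rw [show n - a = n - (a + 1) + 1 by omega, Nat.even_add_one]

namespace UDColorAdj

variable {n : ℕ} {β r : ℕ → ℕ} {P : ℕ → Prop}

theorem neighbour_cases (hadm : ∀ i ≤ n, r i + r (i + 1) ≤ β i) {a b c d : ℕ} (ha : a ≤ n)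
    (h : UDColorAdj n β r P (a, b) (c, d)) :
    (1 ≤ a ∧ P a ∧ b ≤ r a ∧ c = a - 1 ∧ d = b) ∨
    (1 ≤ a ∧ ¬ P a ∧ β a + 1 - r a ≤ b ∧ c = a - 1 ∧
      d = β (a - 1) + 1 - (β a + 1 - b)) ∨
    (a + 1 ≤ n ∧ P (a + 1) ∧ b ≤ r (a + 1) ∧ c = a + 1 ∧ d = b) ∨
    (a + 1 ≤ n ∧ ¬ P (a + 1) ∧ β a + 1 - r (a + 1) ≤ b ∧ c = a + 1 ∧
      d = β (a + 1) + 1 - (β a + 1 - b)) := by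
  have hadm_a := hadm a ha
  obtain ⟨i, j, hi1, hin, hj1, hjr, ⟨hP, hE⟩ | ⟨hP, hE⟩⟩ := h <;>
    obtain ⟨hp, hq⟩ | ⟨hq, hp⟩ := hE <;>
    simp only [Prod.mk.injEq] at hp hq
  · obtain rfl : a = i := hp.1
    exact Or.inl ⟨hi1, hP, by omega, by omega, by omega⟩
  · obtain rfl : i = a + 1 := by omega
    exact Or.inr (Or.inr (Or.inl ⟨hin, hP, by omega, by omega, by omega⟩))
  · obtain rfl : a = i := hp.1
    exact Or.inr (Or.inl ⟨hi1, hP, by omega, by omega, by omega⟩)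
  · obtain rfl : i = a + 1 := by omega
    simp only [Nat.add_sub_cancel] at hp hq
    exact Or.inr (Or.inr (Or.inr ⟨hin, hP, by omega, by omega, by omega⟩))

theorem eq_of_adj_of_adj (hadm : ∀ i ≤ n, r i + r (i + 1) ≤ β i)
    (hP : ∀ a, a + 1 ≤ n → (P a ↔ ¬ P (a + 1))) {a b : ℕ} {q q' : ℕ × ℕ} (ha : a ≤ n)
    (h : UDColorAdj n β r P (a, b) q) (h' : UDColorAdj n β r P (a, b) q') : q = q' := by
  obtain ⟨c, d⟩ := q
  obtain ⟨c', d'⟩ := q'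
  have hadm_a := hadm a ha
  -- Two edges on the same side clash by parity, two on opposite sides by `hadm_a`.
  rcases neighbour_cases hadm ha h with h | h | h | h <;>
    rcases neighbour_cases hadm ha h' with h' | h' | h' | h' <;>
    grind

theorem exists_adj (hr : ∀ i, 0 < r i → 1 ≤ i ∧ i ≤ n) (hβ : ∀ i ≤ n, β i = r i + r (i + 1))
    (hP : ∀ a, a + 1 ≤ n → (P a ↔ ¬ P (a + 1))) (x : UDVert n β) :
    ∃ q : UDVert n β, UDColorAdj n β r P x.1 q.1 := by
  obtain ⟨⟨a, b⟩, ha, hb1, hb⟩ := x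
  dsimp only at ha hb1 hb
  have hβa := hβ a ha
  by_cases hPa : P a
  · by_cases hb' : b ≤ r a
    · obtain ⟨ha1, -⟩ := hr a (by omega)
      have hβa' := hβ (a - 1) (by omega)
      rw [Nat.sub_add_cancel ha1] at hβa'
      exact ⟨⟨(a - 1, b), by dsimp only; omega⟩, a, b, ha1, ha, hb1, hb',
        Or.inl ⟨hPa, Or.inl ⟨rfl, rfl⟩⟩⟩
    · obtain ⟨-, ha1⟩ := hr (a + 1) (by omega)
      have hβa' := hβ (a + 1) ha1
      refine ⟨⟨(a + 1, β (a + 1) + 1 - (β a + 1 - b)), by dsimp only; omega⟩,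
        a + 1, β a + 1 - b, by omega, ha1, by omega, by omega,
        Or.inr ⟨(hP a ha1).mp hPa, Or.inr ⟨rfl, ?_⟩⟩⟩
      simp only [Nat.add_sub_cancel, Prod.mk.injEq, true_and]
      omega
  · by_cases hb' : b ≤ r (a + 1)
    · obtain ⟨-, ha1⟩ := hr (a + 1) (by omega)
      have hβa' := hβ (a + 1) ha1
      refine ⟨⟨(a + 1, b), by dsimp only; omega⟩, a + 1, b, by omega, ha1, hb1, hb',
        Or.inl ⟨by have := hP a ha1; tauto, Or.inr ⟨rfl, ?_⟩⟩⟩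
      simp only [Nat.add_sub_cancel]
    · obtain ⟨ha1, -⟩ := hr a (by omega)
      have hβa' := hβ (a - 1) (by omega)
      rw [Nat.sub_add_cancel ha1] at hβa'
      refine ⟨⟨(a - 1, β (a - 1) + 1 - (β a + 1 - b)), by dsimp only; omega⟩,
        a, β a + 1 - b, ha1, ha, by omega, by omega, Or.inr ⟨hPa, Or.inl ⟨?_, rfl⟩⟩⟩
      simp only [Prod.mk.injEq, true_and]
      omega

theorem existsUnique_adj (hr : ∀ i, 0 < r i → 1 ≤ i ∧ i ≤ n)
    (hβ : ∀ i ≤ n, β i = r i + r (i + 1)) (hP : ∀ a, a + 1 ≤ n → (P a ↔ ¬ P (a + 1)))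
    (x : UDVert n β) : ∃! q : UDVert n β, UDColorAdj n β r P x.1 q.1 :=
  let ⟨q, hq⟩ := exists_adj hr hβ hP x
  ⟨q, hq, fun _ hq' => Subtype.ext (eq_of_adj_of_adj (fun i hi => (hβ i hi).ge) hP x.2.1 hq' hq)⟩

end UDColorAdj

theorem bandM_pos {n : ℕ} (m : ℕ → ℕ) {i : ℕ} (h : 0 < bandM n m i) : 1 ≤ i ∧ i ≤ n := by
  unfold bandM at h
  split_ifs at h with hi
  · exact hi
  · exact (lt_irrefl 0 h).elim

theorem stmt2_general (n : ℕ) :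
    (∀ β r s : ℕ → ℕ,
      r 0 = 0 → r (n + 1) = 0 → s 0 = 0 → s (n + 1) = 0 →
      (∀ i ≤ n, r i + r (i + 1) ≤ β i) → (∀ i ≤ n, s i + s (i + 1) ≤ β i) →
      (∀ x q q' : UDVert n β,
          RedAdj n β r x.1 q.1 → RedAdj n β r x.1 q'.1 → q = q') ∧
      (∀ x q q' : UDVert n β,
          BlueAdj n β s x.1 q.1 → BlueAdj n β s x.1 q'.1 → q = q')) ∧
    (∀ m : ℕ → ℕ, (∀ i, 1 ≤ i → i ≤ n → 0 < m i) →
      ∀ x : UDVert n (bandBeta n m),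
        (∃! q : UDVert n (bandBeta n m),
            RedAdj n (bandBeta n m) (bandM n m) x.1 q.1) ∧
        (∃! q : UDVert n (bandBeta n m),
            BlueAdj n (bandBeta n m) (bandM n m) x.1 q.1)) := by
  have hred (a : ℕ) (ha : a + 1 ≤ n) := even_sub_iff_not_even_sub_succ ha
  have hblue (a : ℕ) (ha : a + 1 ≤ n) : ¬ Even (n - a) ↔ ¬ ¬ Even (n - (a + 1)) :=
    (hred a ha).not
  refine ⟨fun β r s _ _ _ _ hr hs => ⟨fun x q q' h h' => ?_, fun x q q' h h' => ?_⟩,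
    fun m _ x => ⟨?_, ?_⟩⟩
  · rw [redAdj_iff_udColorAdj] at h h'
    exact Subtype.ext (UDColorAdj.eq_of_adj_of_adj hr hred x.2.1 h h')
  · rw [blueAdj_iff_udColorAdj] at h h'
    exact Subtype.ext (UDColorAdj.eq_of_adj_of_adj hs hblue x.2.1 h h')
  · simp only [redAdj_iff_udColorAdj]
    exact UDColorAdj.existsUnique_adj (fun _ => bandM_pos m) (fun _ _ => rfl) hred x
  · simp only [blueAdj_iff_udColorAdj]
    exact UDColorAdj.existsUnique_adj (fun _ => bandM_pos m) (fun _ _ => rfl) hblue x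

/-- (a) Under the admissibility conditions, every vertex of `Γ(β; r, s)` is incident to
at most one red edge and at most one blue edge. (b) For a band dimension vector
`[m_n, …, m_1]` with `r = s = m`, every vertex is incident to exactly one red edge
and exactly one blue edge. -/
theorem stmt2 (n : ℕ) (hn : 1 ≤ n) :
    (∀ β r s : ℕ → ℕ,
      r 0 = 0 → r (n + 1) = 0 → s 0 = 0 → s (n + 1) = 0 →
      (∀ i ≤ n, r i + r (i + 1) ≤ β i) → (∀ i ≤ n, s i + s (i + 1) ≤ β i) →
      (∀ x q q' : UDVert n β,
          RedAdj n β r x.1 q.1 → RedAdj n β r x.1 q'.1 → q = q') ∧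
      (∀ x q q' : UDVert n β,
          BlueAdj n β s x.1 q.1 → BlueAdj n β s x.1 q'.1 → q = q')) ∧
    (∀ m : ℕ → ℕ, (∀ i, 1 ≤ i → i ≤ n → 0 < m i) →
      ∀ x : UDVert n (bandBeta n m),
        (∃! q : UDVert n (bandBeta n m),
            RedAdj n (bandBeta n m) (bandM n m) x.1 q.1) ∧
        (∃! q : UDVert n (bandBeta n m),
            BlueAdj n (bandBeta n m) (bandM n m) x.1 q.1)) :=
  stmt2_general n
end

section
/- Let X be a finite set, let θ : X → X be an involution without fixed points, let C ⊆ X, and let σ : X∖C → X∖C be an involution of X∖C without fixed points. Let ≈ be the smallest equivalence relation on X such that α ≈ θ(α) for all α ∈ X and α ≈ σ(α) for all α ∈ X∖C. Then every equivalence class of ≈ that contains an element of C contains exactly two elements of C; consequently, the number of equivalence classes of ≈ meeting C equals |C|/2. -/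
/-!
Extend `σ` by the identity on `C` to an involution `t` of `X`, so that `C` is the fixed-point
set of `t`, and put `s = θ`, `ρ = s * t`. For `a ∈ C` we have `s a = ρ a`, so the class of `a`
is its `ρ`-cycle. Writing the cycle as `ρ ^ j a` with `j` modulo its length `n`, the involution
`t` acts as `j ↦ -j` and `s` as `j ↦ 1 - j`. Since `s` has no fixed points, `2 * j = 1` has no
solution modulo `n`, so `n` is even and the fixed points of `t` on the cycle are `j = 0` and
`j = n / 2`. Counting `C` fibrewise over the classes then gives `|C| = 2 * #classes`.
-/

open Equiv

section InvolutionPair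

variable {G : Type*} [Group G] {s t : G}

theorem mul_zpow_mul_eq_zpow_neg_mul_left (hs : s⁻¹ = s) (ht : t⁻¹ = t) (k : ℤ) :
    s * (s * t) ^ k = (s * t) ^ (-k) * s := by
  have hconj : s * (s * t) * s⁻¹ = (s * t)⁻¹ := by
    conv_rhs => rw [mul_inv_rev, ht, hs]
    conv_lhs => rw [hs]
    nth_rw 1 [← hs]
    group
  calc s * (s * t) ^ k = s * (s * t) ^ k * s⁻¹ * s := by group
    _ = (s * t) ^ (-k) * s := by rw [← conj_zpow, hconj, inv_zpow']

theorem mul_zpow_mul_eq_zpow_neg_mul_right (hs : s⁻¹ = s) (ht : t⁻¹ = t) (k : ℤ) :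
    t * (s * t) ^ k = (s * t) ^ (-k) * t := by
  have hconj : t * (s * t) * t⁻¹ = (s * t)⁻¹ := by
    conv_rhs => rw [mul_inv_rev, ht, hs]
    group
  calc t * (s * t) ^ k = t * (s * t) ^ k * t⁻¹ * t := by group
    _ = (s * t) ^ (-k) * t := by rw [← conj_zpow, hconj, inv_zpow']

end InvolutionPair

namespace Equiv.Perm

open MulAction

variable {X : Type*}

theorem zpow_apply_eq_zpow_apply_iff (ρ : Perm X) (a : X) (j k : ℤ) :
    (ρ ^ j) a = (ρ ^ k) a ↔ (period ρ a : ℤ) ∣ j - k := by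
  rw [← zpow_smul_eq_iff_period_dvd, Perm.smul_def, sub_eq_neg_add, zpow_add, mul_apply,
    zpow_neg, inv_eq_iff_eq]

theorem ofSubtype_apply_eq_self_iff {p : X → Prop} [DecidablePred p] {f : Perm (Subtype p)}
    (hf : ∀ x, f x ≠ x) (x : X) : ofSubtype f x = x ↔ ¬p x := by
  refine ⟨fun h hx => hf ⟨x, hx⟩ (Subtype.ext ?_), ofSubtype_apply_of_not_mem f⟩
  rw [← ofSubtype_apply_of_mem f hx, h]

theorem eqvGen_of_sameCycle {R : X → X → Prop} {ρ : Perm X}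
    (hρ : ∀ x, Relation.EqvGen R x (ρ x)) {x y : X} (h : SameCycle ρ x y) :
    Relation.EqvGen R x y := by
  obtain ⟨k, rfl⟩ := h
  induction k using Int.induction_on with
  | zero => exact .refl x
  | succ k ih =>
    rw [add_comm, zpow_one_add, mul_apply]
    exact ih.trans _ _ _ (hρ _)
  | pred k ih =>
    rw [sub_eq_neg_add, zpow_add, zpow_neg_one, mul_apply]
    have h := hρ (ρ⁻¹ ((ρ ^ (-(k : ℤ))) x))
    rw [show ρ (ρ⁻¹ _) = _ from ρ.apply_symm_apply _] at h
    exact ih.trans _ _ _ h.symm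

variable {s t : Perm X} {a : X}

theorem apply_zpow_apply_of_apply_eq_self_right (hs : s⁻¹ = s) (ht : t⁻¹ = t)
    (hta : t a = a) (k : ℤ) : t (((s * t) ^ k) a) = ((s * t) ^ (-k)) a := by
  rw [← mul_apply, mul_zpow_mul_eq_zpow_neg_mul_right hs ht, mul_apply, hta]

theorem apply_zpow_apply_of_apply_eq_self_left (hs : s⁻¹ = s) (ht : t⁻¹ = t)
    (hta : t a = a) (k : ℤ) : s (((s * t) ^ k) a) = ((s * t) ^ (1 - k)) a := by
  rw [← mul_apply, mul_zpow_mul_eq_zpow_neg_mul_left hs ht, mul_apply, ← hta, ← mul_apply s t,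
    hta, ← mul_apply, ← zpow_add_one, sub_eq_neg_add]

theorem apply_zpow_apply_eq_self_iff (hs : s⁻¹ = s) (ht : t⁻¹ = t) (hta : t a = a) (k : ℤ) :
    t (((s * t) ^ k) a) = ((s * t) ^ k) a ↔ (period (s * t) a : ℤ) ∣ 2 * k := by
  rw [apply_zpow_apply_of_apply_eq_self_right hs ht hta, zpow_apply_eq_zpow_apply_iff,
    show -k - k = -(2 * k) by ring, dvd_neg]

theorem two_dvd_period (hs : s⁻¹ = s) (ht : t⁻¹ = t) (hs_ne : ∀ x, s x ≠ x)
    (hta : t a = a) :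
    2 ∣ period (s * t) a := by
  by_contra hodd
  obtain ⟨m, hm⟩ : ∃ m, period (s * t) a = 2 * m + 1 := ⟨period (s * t) a / 2, by omega⟩
  apply hs_ne (((s * t) ^ ((m : ℤ) + 1)) a)
  rw [apply_zpow_apply_of_apply_eq_self_left hs ht hta, zpow_apply_eq_zpow_apply_iff]
  exact ⟨-1, by push_cast [hm]; ring⟩

theorem exists_other_fixed_sameCycle [Finite X] (hs : s⁻¹ = s) (ht : t⁻¹ = t)
    (hs_ne : ∀ x, s x ≠ x) (hta : t a = a) :
    ∃ b, t b = b ∧ b ≠ a ∧ SameCycle (s * t) a b ∧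
      ∀ c, t c = c → SameCycle (s * t) a c → c = a ∨ c = b := by
  have hper := period_pos_of_orderOf_pos (orderOf_pos (s * t)) a
  obtain ⟨m, hm⟩ := two_dvd_period hs ht hs_ne hta
  have hiff := zpow_apply_eq_zpow_apply_iff (s * t) a
  refine ⟨((s * t) ^ (m : ℤ)) a, ?_, fun h => ?_, ⟨m, rfl⟩, ?_⟩
  · exact (apply_zpow_apply_eq_self_iff hs ht hta _).2 ⟨1, by push_cast [hm]; ring⟩
  · obtain ⟨q, hq⟩ := (hiff m 0).1 (by rwa [zpow_zero])
    rcases lt_trichotomy q 0 with hq' | hq' | hq' <;> nlinarith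
  · rintro c hc ⟨j, rfl⟩
    obtain ⟨q, hq⟩ := (apply_zpow_apply_eq_self_iff hs ht hta j).1 hc
    rcases Int.even_or_odd q with ⟨r, rfl⟩ | ⟨r, rfl⟩
    · exact .inl (by simpa using (hiff j 0).2 ⟨r, by push_cast [hm] at hq ⊢; linarith⟩)
    · exact .inr ((hiff j m).2 ⟨r, by push_cast [hm] at hq ⊢; linarith⟩)

theorem sameCycle_of_eqvGen (hs : s⁻¹ = s) (ht : t⁻¹ = t) (hta : t a = a)
    {R : X → X → Prop} (hR : ∀ x y, R x y → y = s x ∨ y = t x) {c : X}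
    (h : Relation.EqvGen R a c) :
    SameCycle (s * t) a c := by
  have hinv : ∀ u : Perm X, u⁻¹ = u → ∀ x, u (u x) = x := fun u hu x => by
    nth_rw 1 [← hu]; exact Equiv.symm_apply_apply u x
  have hclosed : ∀ x, SameCycle (s * t) a x →
      SameCycle (s * t) a (s x) ∧ SameCycle (s * t) a (t x) := by
    rintro x ⟨k, rfl⟩
    rw [apply_zpow_apply_of_apply_eq_self_left hs ht hta,
      apply_zpow_apply_of_apply_eq_self_right hs ht hta]
    exact ⟨⟨_, rfl⟩, ⟨_, rfl⟩⟩
  have hstep : ∀ x y, R x y → (SameCycle (s * t) a x ↔ SameCycle (s * t) a y) := by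
    intro x y hxy
    rcases hR x y hxy with rfl | rfl
    · exact ⟨fun h => (hclosed x h).1, fun h => hinv s hs x ▸ (hclosed _ h).1⟩
    · exact ⟨fun h => (hclosed x h).2, fun h => hinv t ht x ▸ (hclosed _ h).2⟩
  have hequiv : Equivalence (fun x y => SameCycle (s * t) a x ↔ SameCycle (s * t) a y) :=
    ⟨fun _ => Iff.rfl, Iff.symm, Iff.trans⟩
  exact (hequiv.eqvGen_iff.1 (Relation.EqvGen.mono hstep _ _ h)).1 (SameCycle.refl _ _)

theorem exists_other_fixed_eqvGen [Finite X] (hs : s⁻¹ = s) (ht : t⁻¹ = t)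
    (hs_ne : ∀ x, s x ≠ x) {R : X → X → Prop}
    (hR_sub : ∀ x y, R x y → y = s x ∨ y = t x)
    (hR_step : ∀ x, Relation.EqvGen R x ((s * t) x)) (hta : t a = a) :
    ∃ b, t b = b ∧ b ≠ a ∧ Relation.EqvGen R a b ∧
      ∀ c, t c = c → Relation.EqvGen R a c → c = a ∨ c = b := by
  obtain ⟨b, htb, hba, hab, honly⟩ := exists_other_fixed_sameCycle hs ht hs_ne hta
  exact ⟨b, htb, hba, eqvGen_of_sameCycle hR_step hab,
    fun c htc hac => honly c htc (sameCycle_of_eqvGen hs ht hta hR_sub hac)⟩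

end Equiv.Perm

open Finset in
theorem card_image_eq_card_div_two_of_pairs {X Y : Type*} [Finite X] {q : X → Y} {C : Set X}
    (hpair : ∀ a ∈ C, ∃ b ∈ C, b ≠ a ∧ q b = q a ∧
      ∀ c ∈ C, q c = q a → c = a ∨ c = b) :
    Nat.card (q '' C) = Nat.card C / 2 := by
  classical
  have := Fintype.ofFinite X
  have hfiber : ∀ y ∈ C.toFinset.image q, #{a ∈ C.toFinset | q a = y} = 2 := by
    intro y hy
    obtain ⟨a, ha, rfl⟩ := mem_image.1 hy
    obtain ⟨b, hb, hba, hqb, honly⟩ := hpair a (Set.mem_toFinset.1 ha)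
    refine card_eq_two.2 ⟨a, b, hba.symm, ?_⟩
    ext c
    simp only [mem_filter, Set.mem_toFinset, mem_insert, mem_singleton]
    grind
  have hC := card_eq_sum_card_image q C.toFinset
  rw [sum_congr rfl hfiber, sum_const, smul_eq_mul] at hC
  rw [Nat.card_eq_card_toFinset, Nat.card_eq_card_toFinset, Set.toFinset_image, hC]
  omega

/-- Let `X` be a finite set, `θ : X → X` a fixed-point-free involution, `C ⊆ X`, and
`σ` a fixed-point-free involution of `X ∖ C`. Let `≈` be the smallest equivalence
relation with `α ≈ θ α` (for all `α`) and `α ≈ σ α` (for `α ∉ C`). Then every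
equivalence class of `≈` meeting `C` contains exactly two elements of `C`, and the
number of classes meeting `C` equals `|C| / 2`. -/
theorem stmt3 (X : Type*) [Finite X] (θ : X → X)
    (hθinv : Function.Involutive θ) (hθnf : ∀ x, θ x ≠ x)
    (C : Set X) (σ : {x : X // x ∉ C} → {x : X // x ∉ C})
    (hσinv : Function.Involutive σ) (hσnf : ∀ x, σ x ≠ x)
    (R : X → X → Prop)
    (hR : ∀ a b, R a b ↔ (θ a = b ∨ ∃ ha : a ∉ C, (σ ⟨a, ha⟩ : X) = b)) :
    (∀ a ∈ C, ∃ b, b ∈ C ∧ b ≠ a ∧ Relation.EqvGen R a b ∧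
      ∀ c ∈ C, Relation.EqvGen R a c → c = a ∨ c = b) ∧
    Nat.card ((fun a => Quot.mk R a) '' C) = Nat.card C / 2 := by
  classical
  set s : Perm X := hθinv.toPerm θ
  set t : Perm X := Perm.ofSubtype (hσinv.toPerm σ)
  have hs : s⁻¹ = s := hθinv.toPerm_symm
  have ht : t⁻¹ = t := by rw [← map_inv, Perm.inv_def, hσinv.toPerm_symm]
  have ht_mem : ∀ x (hx : x ∉ C), t x = σ ⟨x, hx⟩ :=
    fun x hx => Perm.ofSubtype_apply_of_mem (p := (· ∉ C)) _ hx
  have ht_eq_self : ∀ x, t x = x ↔ x ∈ C :=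
    fun x => (Perm.ofSubtype_apply_eq_self_iff hσnf x).trans not_not
  have hR_sub : ∀ x y, R x y → y = s x ∨ y = t x := by
    intro x y hxy
    rcases (hR x y).1 hxy with h | ⟨hx, h⟩
    · exact .inl h.symm
    · exact .inr (h ▸ (ht_mem x hx).symm)
  have hR_step : ∀ x, Relation.EqvGen R x ((s * t) x) := by
    intro x
    refine .trans _ (t x) _ ?_ (.rel _ _ ((hR _ _).2 (.inl rfl)))
    by_cases hx : x ∈ C
    · rw [(ht_eq_self x).2 hx]; exact .refl x
    · exact .rel _ _ ((hR _ _).2 (.inr ⟨hx, (ht_mem x hx).symm⟩))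
  have hpair : ∀ a ∈ C, ∃ b, b ∈ C ∧ b ≠ a ∧ Relation.EqvGen R a b ∧
      ∀ c ∈ C, Relation.EqvGen R a c → c = a ∨ c = b := by
    intro a ha
    obtain ⟨b, htb, hba, hab, honly⟩ :=
      Perm.exists_other_fixed_eqvGen hs ht hθnf hR_sub hR_step ((ht_eq_self a).2 ha)
    exact ⟨b, (ht_eq_self b).1 htb, hba, hab, fun c hc => honly c ((ht_eq_self c).2 hc)⟩
  refine ⟨hpair, card_image_eq_card_div_two_of_pairs fun a ha => ?_⟩
  obtain ⟨b, hb, hba, hab, honly⟩ := hpair a ha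
  exact ⟨b, hb, hba, (Quot.eqvGen_sound hab).symm,
    fun c hc hca => honly c hc (Quot.eqvGen_exact hca.symm)⟩
end

section
/- Let n ≥ 2 and let m_1,…,m_n be positive integers. If m_{i+1} = m_i for some 1 ≤ i ≤ n−1, then N([m_n,…,m_1]) = N([m_n,…,m_{i+1},m_{i−1},…,m_1]), where the right-hand side is the number of connected components of the up-and-down graph of the band dimension vector of length n−1 obtained by deleting the entry m_i. -/
/-!
If `r (i + 1) = r i` and `β i = r i + r i`, every vertex of level `i` of `Γ(β; r, r)` has exactly
one edge down and one edge up: head edges on its first half, tail edges on its second half. So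
level `i` only relays edges between levels `i - 1` and `i + 1`. Skipping level `i` embeds the
graph with level `i` deleted, and folding level `i` onto level `i - 1` retracts onto it; the two
maps are inverse on connected components. For a band vector with `m (i + 1) = m i`, deleting the
entry `m i` deletes exactly level `i` of `β` and of `r`.
-/

namespace SimpleGraph

variable {V W : Type*} {G : SimpleGraph V} {H : SimpleGraph W}

theorem Reachable.map_of_adj {f : V → W} (hf : ∀ a b, G.Adj a b → H.Reachable (f a) (f b))
    {a b : V} (h : G.Reachable a b) : H.Reachable (f a) (f b) := by
  rw [reachable_iff_reflTransGen] at h ⊢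
  exact Relation.ReflTransGen.lift' f (fun a b hab => (reachable_iff_reflTransGen _ _).mp
    (hf a b hab)) a b h

theorem Reachable.of_eq {u v : V} (h : u = v) : G.Reachable u v :=
  h ▸ .rfl

theorem natCard_connectedComponent_eq_of_retraction (f : V → W) (g : W → V)
    (hf : ∀ a b, G.Adj a b → H.Reachable (f a) (f b))
    (hg : ∀ a b, H.Adj a b → G.Reachable (g a) (g b))
    (hgf : Function.LeftInverse g f) (hfg : ∀ w, H.Reachable (f (g w)) w) :
    Nat.card G.ConnectedComponent = Nat.card H.ConnectedComponent := by
  refine Nat.card_congr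
    { toFun := ConnectedComponent.lift (fun v => H.connectedComponentMk (f v))
        fun a b p _ => ConnectedComponent.sound (p.reachable.map_of_adj hf)
      invFun := ConnectedComponent.lift (fun w => G.connectedComponentMk (g w))
        fun a b p _ => ConnectedComponent.sound (p.reachable.map_of_adj hg)
      left_inv := ConnectedComponent.ind fun v => by simp [hgf v]
      right_inv := ConnectedComponent.ind fun w => ConnectedComponent.sound (hfg w) }

end SimpleGraph

def liftLevel (i k : ℕ) : ℕ := if k < i then k else k + 1

def lowerLevel (i k : ℕ) : ℕ := if k < i then k else k - 1

lemma liftLevel_self (i : ℕ) : liftLevel i i = i + 1 := by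
  simp [liftLevel]

lemma liftLevel_pred_self {i : ℕ} (hi : 1 ≤ i) : liftLevel i (i - 1) = i - 1 := by
  simp [liftLevel]; omega

lemma liftLevel_sub_one {i k : ℕ} (hk : k ≠ i) : liftLevel i (k - 1) = liftLevel i k - 1 := by
  unfold liftLevel; split_ifs <;> omega

lemma lowerLevel_liftLevel (i k : ℕ) : lowerLevel i (liftLevel i k) = k := by
  unfold liftLevel lowerLevel; split_ifs <;> omega

lemma liftLevel_lowerLevel {i k : ℕ} (hk : k ≠ i) : liftLevel i (lowerLevel i k) = k := by
  unfold liftLevel lowerLevel; split_ifs <;> omega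

namespace UDGraph

variable {n : ℕ} {β r : ℕ → ℕ}

-- For `r = s` the parity of `n - k` only decides colours, so it disappears from the edges.
def IsDownEdge (n : ℕ) (β r : ℕ → ℕ) (p q : ℕ × ℕ) : Prop :=
  ∃ k j, 1 ≤ k ∧ k ≤ n ∧ 1 ≤ j ∧ j ≤ r k ∧
    (p = (k, j) ∧ q = (k - 1, j) ∨ p = (k, β k + 1 - j) ∧ q = (k - 1, β (k - 1) + 1 - j))

lemma IsDownEdge.fst_eq {p q : ℕ × ℕ} (h : IsDownEdge n β r p q) : q.1 + 1 = p.1 := by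
  obtain ⟨k, j, hk, -, -, -, ⟨rfl, rfl⟩ | ⟨rfl, rfl⟩⟩ := h <;> dsimp only <;> omega

lemma redAdj_or_blueAdj_iff {p q : ℕ × ℕ} :
    RedAdj n β r p q ∨ BlueAdj n β r p q ↔
      IsDownEdge n β r p q ∨ IsDownEdge n β r q p := by
  constructor
  · rintro (⟨k, j, h1, h2, h3, h4, ⟨-, h | h⟩ | ⟨-, h | h⟩⟩ |
        ⟨k, j, h1, h2, h3, h4, ⟨-, h | h⟩ | ⟨-, h | h⟩⟩) <;>
      first
      | exact Or.inl ⟨k, j, h1, h2, h3, h4, by tauto⟩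
      | exact Or.inr ⟨k, j, h1, h2, h3, h4, by tauto⟩
  · rintro (⟨k, j, h1, h2, h3, h4, h | h⟩ | ⟨k, j, h1, h2, h3, h4, h | h⟩) <;>
      by_cases he : Even (n - k) <;>
      first
      | exact Or.inl ⟨k, j, h1, h2, h3, h4, by tauto⟩
      | exact Or.inr ⟨k, j, h1, h2, h3, h4, by tauto⟩

lemma adj_iff_isDownEdge {x y : UDVert n β} :
    (UDGraph n β r r).Adj x y ↔ IsDownEdge n β r x.1 y.1 ∨ IsDownEdge n β r y.1 x.1 := by
  refine ⟨fun h => redAdj_or_blueAdj_iff.mp h.2, fun h => ⟨?_, redAdj_or_blueAdj_iff.mpr h⟩⟩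
  rintro rfl
  rcases h with h | h <;> have := h.fst_eq <;> omega

lemma reachable_of_isDownEdge {x y : UDVert n β} (h : IsDownEdge n β r x.1 y.1) :
    (UDGraph n β r r).Reachable x y :=
  (adj_iff_isDownEdge.mpr (Or.inl h)).reachable

variable {i : ℕ}

lemma isDownEdge_map_liftLevel (hi : 1 ≤ i) (hr : r (i + 1) = r i) (hβ : r i ≤ β i)
    {p q : ℕ × ℕ} (h : IsDownEdge (n - 1) (β ∘ liftLevel i) (r ∘ liftLevel i) p q) :
    IsDownEdge n β r (p.map (liftLevel i) id) (q.map (liftLevel i) id) ∨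
      ∃ c, 1 ≤ c ∧ c ≤ β i ∧ IsDownEdge n β r (p.map (liftLevel i) id) (i, c) ∧
        IsDownEdge n β r (i, c) (q.map (liftLevel i) id) := by
  obtain ⟨k, j, hk1, hkn, hj1, hjr, hpq⟩ := h
  by_cases hk : k = i
  · subst hk
    have hup := liftLevel_self k
    have hdown := liftLevel_pred_self hk1
    simp only [Function.comp_apply, hup] at hjr hpq
    right
    rcases hpq with ⟨rfl, rfl⟩ | ⟨rfl, rfl⟩
    · exact ⟨j, hj1, by omega,
        ⟨k + 1, j, by omega, by omega, hj1, hjr, Or.inl (by simp [hup])⟩,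
        ⟨k, j, hk1, by omega, hj1, by omega, Or.inl (by simp [hdown])⟩⟩
    · exact ⟨β k + 1 - j, by omega, by omega,
        ⟨k + 1, j, by omega, by omega, hj1, hjr, Or.inr (by simp [hup])⟩,
        ⟨k, j, hk1, by omega, hj1, by omega, Or.inr (by simp [hdown])⟩⟩
  · left
    refine ⟨liftLevel i k, j, ?_, ?_, hj1, hjr, ?_⟩
    · unfold liftLevel; split_ifs <;> omega
    · unfold liftLevel; split_ifs <;> omega
    · rcases hpq with ⟨rfl, rfl⟩ | ⟨rfl, rfl⟩ <;> simp [liftLevel_sub_one hk]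

-- Folds level `i` onto level `i - 1` along the unique downward edge of each of its vertices.
def collapsePair (β r : ℕ → ℕ) (i : ℕ) (p : ℕ × ℕ) : ℕ × ℕ :=
  (lowerLevel i p.1, if p.1 = i ∧ r i < p.2 then β (i - 1) + p.2 - β i else p.2)

lemma collapsePair_of_ne {k : ℕ} (hk : k ≠ i) (a : ℕ) :
    collapsePair β r i (k, a) = (lowerLevel i k, a) := by
  simp [collapsePair, hk]

lemma collapsePair_self_of_le {a : ℕ} (ha : a ≤ r i) :
    collapsePair β r i (i, a) = (i - 1, a) := by
  simp [collapsePair, lowerLevel, ha]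

lemma collapsePair_self_of_lt {a : ℕ} (ha : r i < a) :
    collapsePair β r i (i, a) = (i - 1, β (i - 1) + a - β i) := by
  simp [collapsePair, lowerLevel, ha]

lemma collapsePair_map_liftLevel (p : ℕ × ℕ) :
    collapsePair β r i (p.map (liftLevel i) id) = p := by
  obtain ⟨k, a⟩ := p
  have : liftLevel i k ≠ i := by unfold liftLevel; split_ifs <;> omega
  simp [collapsePair_of_ne this, lowerLevel_liftLevel]

lemma map_liftLevel_collapsePair {k : ℕ} (hk : k ≠ i) (a : ℕ) :
    (collapsePair β r i (k, a)).map (liftLevel i) id = (k, a) := by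
  simp [collapsePair_of_ne hk, liftLevel_lowerLevel hk]

lemma isDownEdge_map_liftLevel_collapsePair (hi : 1 ≤ i) (hin : i ≤ n)
    (hβ : β i = r i + r i) {a : ℕ} (ha1 : 1 ≤ a) (ha2 : a ≤ β i) :
    IsDownEdge n β r (i, a) ((collapsePair β r i (i, a)).map (liftLevel i) id) := by
  by_cases har : a ≤ r i
  · refine ⟨i, a, hi, hin, ha1, har, Or.inl ?_⟩
    simp [collapsePair_self_of_le har, liftLevel_pred_self hi]
  · refine ⟨i, β i + 1 - a, hi, hin, by omega, by omega, Or.inr ?_⟩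
    simp [collapsePair_self_of_lt (lt_of_not_ge har), liftLevel_pred_self hi]
    omega

lemma collapsePair_eq_or_isDownEdge (hi : 1 ≤ i) (hin : i ≤ n) (hr : r (i + 1) = r i)
    (hβ : β i = r i + r i) {p q : ℕ × ℕ} (h : IsDownEdge n β r p q) :
    collapsePair β r i p = collapsePair β r i q ∨
      IsDownEdge (n - 1) (β ∘ liftLevel i) (r ∘ liftLevel i)
        (collapsePair β r i p) (collapsePair β r i q) := by
  obtain ⟨k, j, hk1, hkn, hj1, hjr, hpq⟩ := h
  have hi' : i - 1 ≠ i := by omega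
  by_cases hk : k = i
  · subst hk
    left
    rcases hpq with ⟨rfl, rfl⟩ | ⟨rfl, rfl⟩
    · rw [collapsePair_self_of_le hjr, collapsePair_of_ne hi', lowerLevel, if_pos (by omega)]
    · rw [collapsePair_self_of_lt (by omega), collapsePair_of_ne hi', lowerLevel,
        if_pos (by omega)]
      congr 1
      omega
  right
  obtain rfl | hk' := eq_or_ne k (i + 1)
  · refine ⟨i, j, hi, by omega, hj1, by simpa [liftLevel_self i, hr] using hjr, ?_⟩
    simp only [Nat.add_sub_cancel] at hpq
    have hnext : lowerLevel i (i + 1) = i := by simp [lowerLevel]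
    rcases hpq with ⟨rfl, rfl⟩ | ⟨rfl, rfl⟩
    · left
      rw [collapsePair_of_ne (by omega), collapsePair_self_of_le (by omega), hnext]
      exact ⟨rfl, rfl⟩
    · right
      rw [collapsePair_of_ne (by omega), collapsePair_self_of_lt (by omega), hnext]
      simp only [Function.comp_apply, liftLevel_self i, liftLevel_pred_self hi, Prod.mk.injEq,
        true_and]
      omega
  · have hsub : lowerLevel i (k - 1) = lowerLevel i k - 1 := by
      unfold lowerLevel; split_ifs <;> omega
    have hk'' : k - 1 ≠ i := by omega
    refine ⟨lowerLevel i k, j, ?_, ?_, hj1, by simpa [liftLevel_lowerLevel hk] using hjr, ?_⟩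
    · unfold lowerLevel; split_ifs <;> omega
    · unfold lowerLevel; split_ifs <;> omega
    · rcases hpq with ⟨rfl, rfl⟩ | ⟨rfl, rfl⟩
      · left
        rw [collapsePair_of_ne hk, collapsePair_of_ne hk'', hsub]
        exact ⟨rfl, rfl⟩
      · right
        rw [collapsePair_of_ne hk, collapsePair_of_ne hk'', ← hsub]
        simp [liftLevel_lowerLevel hk, liftLevel_lowerLevel hk'']

lemma reachable_of_forall_isDownEdge {W : Type*} {H : SimpleGraph W} {f : UDVert n β → W}
    (hf : ∀ x y : UDVert n β, IsDownEdge n β r x.1 y.1 → H.Reachable (f x) (f y))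
    {x y : UDVert n β} (h : (UDGraph n β r r).Adj x y) : H.Reachable (f x) (f y) :=
  (adj_iff_isDownEdge.mp h).elim (hf x y) fun h => (hf y x h).symm

def liftVert (hi : 1 ≤ i) (v : UDVert (n - 1) (β ∘ liftLevel i)) : UDVert n β :=
  ⟨v.1.map (liftLevel i) id, by
    obtain ⟨hv, ha1, ha2⟩ := v.2
    refine ⟨?_, ha1, ha2⟩
    show liftLevel i v.1.1 ≤ n
    unfold liftLevel; split_ifs <;> omega⟩

lemma collapsePair_mem {k a : ℕ} (hi : 1 ≤ i) (hin : i ≤ n) (hβ : β i = r i + r i)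
    (hβi : r i ≤ β (i - 1)) (hk : k ≤ n) (ha1 : 1 ≤ a) (ha2 : a ≤ β k) :
    (collapsePair β r i (k, a)).1 ≤ n - 1 ∧ 1 ≤ (collapsePair β r i (k, a)).2 ∧
      (collapsePair β r i (k, a)).2 ≤ (β ∘ liftLevel i) (collapsePair β r i (k, a)).1 := by
  by_cases hki : k = i
  · subst hki
    by_cases har : a ≤ r k
    · simp only [collapsePair_self_of_le har, Function.comp_apply, liftLevel_pred_self hi]
      omega
    · simp only [collapsePair_self_of_lt (lt_of_not_ge har), Function.comp_apply,
        liftLevel_pred_self hi]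
      omega
  · simp only [collapsePair_of_ne hki, Function.comp_apply, liftLevel_lowerLevel hki]
    refine ⟨?_, ha1, ha2⟩
    unfold lowerLevel; split_ifs <;> omega

def collapseVert (hi : 1 ≤ i) (hin : i ≤ n) (hβ : β i = r i + r i) (hβi : r i ≤ β (i - 1))
    (v : UDVert n β) : UDVert (n - 1) (β ∘ liftLevel i) :=
  ⟨collapsePair β r i v.1, collapsePair_mem hi hin hβ hβi v.2.1 v.2.2.1 v.2.2.2⟩

theorem natCard_connectedComponent_comp_liftLevel (hi : 1 ≤ i) (hin : i ≤ n)
    (hr : r (i + 1) = r i) (hβ : β i = r i + r i) (hβi : r i ≤ β (i - 1)) :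
    Nat.card (UDGraph (n - 1) (β ∘ liftLevel i) (r ∘ liftLevel i)
        (r ∘ liftLevel i)).ConnectedComponent =
      Nat.card (UDGraph n β r r).ConnectedComponent := by
  refine SimpleGraph.natCard_connectedComponent_eq_of_retraction (liftVert hi)
    (collapseVert (r := r) hi hin hβ hβi) ?_ ?_ ?_ ?_
  · refine fun a b => reachable_of_forall_isDownEdge fun x y hxy => ?_
    rcases isDownEdge_map_liftLevel hi hr (by omega) hxy with h | ⟨c, hc1, hc2, hxc, hcy⟩
    · exact reachable_of_isDownEdge h
    · exact (reachable_of_isDownEdge (y := ⟨(i, c), hin, hc1, hc2⟩) hxc).trans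
        (reachable_of_isDownEdge hcy)
  · refine fun a b => reachable_of_forall_isDownEdge fun x y hxy => ?_
    rcases collapsePair_eq_or_isDownEdge hi hin hr hβ hxy with h | h
    · exact .of_eq (Subtype.ext h)
    · exact reachable_of_isDownEdge h
  · exact fun v => Subtype.ext (collapsePair_map_liftLevel v.1)
  · rintro ⟨⟨k, a⟩, hk, ha1, ha2⟩
    by_cases hki : k = i
    · subst hki
      exact (reachable_of_isDownEdge
        (isDownEdge_map_liftLevel_collapsePair hi hin hβ ha1 ha2)).symm
    · exact .of_eq (Subtype.ext (map_liftLevel_collapsePair hki a))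

end UDGraph

lemma bandM_comp_liftLevel {n i : ℕ} (m : ℕ → ℕ) (hi : 1 ≤ i) (hin : i ≤ n) :
    bandM (n - 1) (m ∘ liftLevel i) = bandM n m ∘ liftLevel i := by
  funext k
  simp only [bandM, liftLevel, Function.comp_apply]
  split_ifs <;> first | rfl | omega

lemma bandM_succ_of_eq {n i : ℕ} {m : ℕ → ℕ} (hi : 1 ≤ i) (hin : i < n)
    (heq : m (i + 1) = m i) : bandM n m (i + 1) = bandM n m i := by
  simp only [bandM, if_pos (show 1 ≤ i + 1 ∧ i + 1 ≤ n by omega),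
    if_pos (show 1 ≤ i ∧ i ≤ n by omega), heq]

lemma bandBeta_comp_liftLevel {n i : ℕ} {m : ℕ → ℕ} (hi : 1 ≤ i) (hin : i < n)
    (heq : m (i + 1) = m i) :
    bandBeta (n - 1) (m ∘ liftLevel i) = bandBeta n m ∘ liftLevel i := by
  funext k
  simp only [bandBeta, bandM_comp_liftLevel m hi hin.le, Function.comp_apply]
  congr 1
  by_cases hk : k + 1 = i
  · subst hk
    simp [liftLevel, bandM_succ_of_eq hi hin heq]
  · congr 1
    unfold liftLevel; split_ifs <;> omega

theorem stmt4_general (n : ℕ) (m : ℕ → ℕ)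
    (i : ℕ) (hi1 : 1 ≤ i) (hi2 : i ≤ n - 1) (heq : m (i + 1) = m i) :
    NBand n m = NBand (n - 1) (fun j => if j < i then m j else m (j + 1)) := by
  have hin : i < n := by omega
  have hm : (fun j => if j < i then m j else m (j + 1)) = m ∘ liftLevel i := by
    funext j
    simp only [Function.comp_apply, liftLevel]
    split_ifs <;> rfl
  have hr := bandM_succ_of_eq hi1 hin heq
  have hβ : bandBeta n m i = bandM n m i + bandM n m i := by rw [bandBeta, hr]
  have hβi : bandM n m i ≤ bandBeta n m (i - 1) := by
    rw [bandBeta, Nat.sub_add_cancel hi1]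
    exact Nat.le_add_left _ _
  rw [hm, NBand, NBand, bandGraph, bandGraph, bandBeta_comp_liftLevel hi1 hin heq,
    bandM_comp_liftLevel m hi1 hin.le]
  exact (UDGraph.natCard_connectedComponent_comp_liftLevel hi1 hin.le hr hβ hβi).symm

/-- If `m (i+1) = m i`, deleting the entry `m i` does not change the number of connected
components of the up-and-down graph of the band dimension vector. -/
theorem stmt4 (n : ℕ) (hn : 2 ≤ n) (m : ℕ → ℕ)
    (hpos : ∀ i, 1 ≤ i → i ≤ n → 0 < m i)
    (i : ℕ) (hi1 : 1 ≤ i) (hi2 : i ≤ n - 1) (heq : m (i + 1) = m i) :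
    NBand n m = NBand (n - 1) (fun j => if j < i then m j else m (j + 1)) :=
  stmt4_general n m i hi1 hi2 heq
end

section
/- Let n ≥ 3 and let m_1,…,m_n be positive integers. If m_i > m_{i−1} = m_{i+1} for some 2 ≤ i ≤ n−1, then N([m_n,…,m_1]) = (m_i − m_{i−1}) + N([m_n,…,m_{i+1}, m_{i+1}, m_{i−1},…,m_1]), i.e. replacing the entry m_i by m_{i+1} decreases the number of connected components of the up-and-down graph by exactly m_i − m_{i−1}. -/
/-! On the two levels `i - 1`, `i` around the peak, the positions `t` with `m (i-1) < t ≤ m i`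
are joined only to each other, `e^(i)_t` to `e^(i-1)_t`: they form `m i - m (i-1)` components.
Every other edge at these levels counts positions from the bottom, reaching at most
`m (i-1) = m (i+1)`, or from the top, reaching no lower than `m i + 1`. So deleting the gap and
closing it up identifies the rest of the graph with the graph of the lowered sequence. -/

namespace SimpleGraph

variable {V W ι : Type*} {G : SimpleGraph V}

lemma Reachable.eq_of_forall_adj {f : V → ι} (hf : ∀ ⦃v w⦄, G.Adj v w → f v = f w)
    {v w : V} (h : G.Reachable v w) : f v = f w := by
  obtain ⟨q⟩ := h
  induction q with
  | nil => rfl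
  | cons h _ ih => exact (hf h).trans ih

theorem card_connectedComponent_eq_of_fibers (c : V → ι)
    (hadj : ∀ ⦃v w⦄, G.Adj v w → c v = c w)
    (hreach : ∀ ⦃v w⦄, c v = c w → G.Reachable v w)
    (hc : Function.Surjective c) : Nat.card G.ConnectedComponent = Nat.card ι := by
  refine Nat.card_congr (Equiv.ofBijective (Quot.lift c fun _ _ h => h.eq_of_forall_adj hadj)
    ⟨fun C D => ?_, fun i => ?_⟩)
  · induction C using ConnectedComponent.ind
    induction D using ConnectedComponent.ind
    exact fun h => ConnectedComponent.sound (hreach h)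
  · obtain ⟨v, rfl⟩ := hc i
    exact ⟨G.connectedComponentMk v, rfl⟩

theorem card_connectedComponent_eq_ncard_add [Finite V] {G' : SimpleGraph W} (φ : G' ↪g G)
    (D : Set V) (κ : V → ι) (hD : ∀ x, x ∉ D ↔ x ∈ Set.range φ)
    (hadj : ∀ ⦃x y⦄, G.Adj x y → x ∈ D → y ∈ D ∧ κ x = κ y)
    (hreach : ∀ ⦃x y⦄, x ∈ D → y ∈ D → κ x = κ y → G.Reachable x y) :
    Nat.card G.ConnectedComponent = (κ '' D).ncard + Nat.card G'.ConnectedComponent := by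
  classical
  let c : V → ↥(κ '' D) ⊕ G'.ConnectedComponent := fun x =>
    if hx : x ∈ D then .inl ⟨κ x, x, hx, rfl⟩
    else .inr (G'.connectedComponentMk ((hD x).1 hx).choose)
  have hc_live (u : W) : c (φ u) = .inr (G'.connectedComponentMk u) := by
    have hu : φ u ∉ D := (hD _).2 ⟨u, rfl⟩
    simp only [c, dif_neg hu, φ.injective ((hD _).1 hu).choose_spec]
  have hlive {x : V} (hx : x ∉ D) : ∃ u, x = φ u := ((hD x).1 hx).imp fun _ h => h.symm
  have : Finite W := .of_injective φ φ.injective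
  rw [← Nat.card_coe_set_eq, ← Nat.card_sum]
  refine card_connectedComponent_eq_of_fibers c (fun x y hxy => ?_) (fun x y hxy => ?_) ?_
  · by_cases hx : x ∈ D
    · obtain ⟨hy, hκ⟩ := hadj hxy hx
      simp only [c, dif_pos hx, dif_pos hy, hκ]
    by_cases hy : y ∈ D
    · exact absurd (hadj hxy.symm hy).1 hx
    obtain ⟨⟨u, rfl⟩, ⟨v, rfl⟩⟩ := And.intro (hlive hx) (hlive hy)
    rw [hc_live, hc_live, ConnectedComponent.connectedComponentMk_eq_of_adj (φ.map_adj_iff.1 hxy)]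
  · by_cases hx : x ∈ D <;> by_cases hy : y ∈ D
    · simp only [c, dif_pos hx, dif_pos hy, Sum.inl.injEq] at hxy
      exact hreach hx hy (congrArg Subtype.val hxy)
    · simp [c, dif_pos hx, dif_neg hy] at hxy
    · simp [c, dif_neg hx, dif_pos hy] at hxy
    obtain ⟨⟨u, rfl⟩, ⟨v, rfl⟩⟩ := And.intro (hlive hx) (hlive hy)
    rw [hc_live, hc_live, Sum.inr.injEq, ConnectedComponent.eq] at hxy
    exact hxy.map φ.toHom
  · rintro (⟨_, x, hx, rfl⟩ | C)
    · exact ⟨x, by simp only [c, dif_pos hx]⟩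
    · induction C using ConnectedComponent.ind with | h u => exact ⟨φ u, hc_live u⟩

end SimpleGraph

lemma redAdj_or_blueAdj_iff {n : ℕ} {β r : ℕ → ℕ} {p q : ℕ × ℕ} :
    RedAdj n β r p q ∨ BlueAdj n β r p q ↔
      ∃ i j, 1 ≤ i ∧ i ≤ n ∧ 1 ≤ j ∧ j ≤ r i ∧
        ((p = (i, j) ∧ q = (i - 1, j) ∨ q = (i, j) ∧ p = (i - 1, j)) ∨
          (p = (i, β i + 1 - j) ∧ q = (i - 1, β (i - 1) + 1 - j) ∨
            q = (i, β i + 1 - j) ∧ p = (i - 1, β (i - 1) + 1 - j))) := by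
  simp only [RedAdj, BlueAdj, ← exists_or, ← and_or_left]
  refine exists₂_congr fun i j => and_congr_right' <| and_congr_right' <| and_congr_right' <|
    and_congr_right' ?_
  by_cases Even (n - i) <;> tauto

namespace UDBand

def bandDim (M : ℕ → ℕ) (k : ℕ) : ℕ := M k + M (k + 1)

/-- `bandGraph n m` is `bandUD n (bandM n m)`. -/
def bandUD (n : ℕ) (M : ℕ → ℕ) : SimpleGraph (UDVert n (bandDim M)) :=
  UDGraph n (bandDim M) M M

/-- `e^{(k+1)}_s` and `e^{(k)}_t` are adjacent in `bandUD n M`: the edges between the two levels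
match their first `M (k + 1)` positions from the bottom and their last `M (k + 1)` from the top. -/
def BandEdge (n : ℕ) (M : ℕ → ℕ) (k s t : ℕ) : Prop :=
  k < n ∧ (1 ≤ s ∧ s ≤ M (k + 1) ∧ t = s ∨
    M (k + 2) < s ∧ s ≤ M (k + 1) + M (k + 2) ∧ t + M (k + 2) = s + M k)

lemma redAdj_or_blueAdj_bandDim_iff {n : ℕ} {M : ℕ → ℕ} {p q : ℕ × ℕ} :
    RedAdj n (bandDim M) M p q ∨ BlueAdj n (bandDim M) M p q ↔
      p.1 = q.1 + 1 ∧ BandEdge n M q.1 p.2 q.2 ∨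
        q.1 = p.1 + 1 ∧ BandEdge n M p.1 q.2 p.2 := by
  obtain ⟨p₁, p₂⟩ := p
  obtain ⟨q₁, q₂⟩ := q
  simp only [redAdj_or_blueAdj_iff, BandEdge, bandDim, Prod.mk.injEq]
  constructor
  · rintro ⟨i, j, hi, hin, hj, hjM, h⟩
    obtain ⟨k, rfl⟩ : ∃ k, i = k + 1 := ⟨i - 1, by omega⟩
    simp only [Nat.add_sub_cancel, Nat.add_assoc, Nat.reduceAdd] at h
    rcases h with (⟨⟨rfl, rfl⟩, rfl, rfl⟩ | ⟨⟨rfl, rfl⟩, rfl, rfl⟩) |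
      (⟨⟨rfl, rfl⟩, rfl, rfl⟩ | ⟨⟨rfl, rfl⟩, rfl, rfl⟩) <;> omega
  · rintro (⟨rfl, hk, ⟨hs, hsM, ht⟩ | ⟨hs, hsM, ht⟩⟩ |
      ⟨rfl, hk, ⟨hs, hsM, ht⟩ | ⟨hs, hsM, ht⟩⟩)
    · exact ⟨q₁ + 1, p₂, by omega, hk, hs, hsM,
        by simp only [Nat.add_sub_cancel, true_and, and_true]; omega⟩
    · exact ⟨q₁ + 1, M (q₁ + 1) + M (q₁ + 2) + 1 - p₂, by omega, hk, by omega, by omega,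
        by simp only [Nat.add_sub_cancel, Nat.add_assoc, Nat.reduceAdd, true_and]; omega⟩
    · exact ⟨p₁ + 1, q₂, by omega, hk, hs, hsM,
        by simp only [Nat.add_sub_cancel, true_and, and_true]; omega⟩
    · exact ⟨p₁ + 1, M (p₁ + 1) + M (p₁ + 2) + 1 - q₂, by omega, hk, by omega, by omega,
        by simp only [Nat.add_sub_cancel, Nat.add_assoc, Nat.reduceAdd, true_and]; omega⟩

lemma bandUD_adj {n : ℕ} {M : ℕ → ℕ} {x y : UDVert n (bandDim M)} :
    (bandUD n M).Adj x y ↔ x.1.1 = y.1.1 + 1 ∧ BandEdge n M y.1.1 x.1.2 y.1.2 ∨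
      y.1.1 = x.1.1 + 1 ∧ BandEdge n M x.1.1 y.1.2 x.1.2 := by
  refine (and_iff_right_of_imp fun h hxy => ?_).trans redAdj_or_blueAdj_bandDim_iff
  rw [redAdj_or_blueAdj_bandDim_iff, hxy] at h
  omega

instance (n : ℕ) (β : ℕ → ℕ) : Finite (UDVert n β) :=
  Set.Finite.to_subtype (s := {x : ℕ × ℕ | x.1 ≤ n ∧ 1 ≤ x.2 ∧ x.2 ≤ β x.1}) <|
    ((Set.finite_Iic n).biUnion fun L _ =>
        (Set.finite_singleton L).prod (Set.finite_Icc 1 (β L))).subset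
      fun x hx => Set.mem_biUnion (x := x.1) hx.1 ⟨rfl, hx.2⟩

section Peak

variable {n p a b k L s t : ℕ} {M : ℕ → ℕ}

def IsGap (p a b L t : ℕ) : Prop := (L = p ∨ L = p + 1) ∧ a < t ∧ t ≤ b

def gapShift (p a b L t : ℕ) : ℕ := if (L = p ∨ L = p + 1) ∧ a < t then t + (b - a) else t

lemma BandEdge.eq_of_isGap (hMp : M p = a) (hMp1 : M (p + 1) = b) (hMp2 : M (p + 2) = a)
    (h : BandEdge n M k s t) (hg : IsGap p a b (k + 1) s ∨ IsGap p a b k t) :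
    k = p ∧ t = s := by
  unfold IsGap at hg
  unfold BandEdge at h
  obtain rfl | rfl | rfl : k + 1 = p ∨ k = p ∨ k = p + 1 := by omega
  all_goals simp only [Nat.add_assoc, Nat.reduceAdd, true_or, or_true, true_and] at *; omega

lemma gapShift_injective (hab : a ≤ b) : Function.Injective (gapShift p a b L) := by
  intro s t h
  unfold gapShift at h
  split_ifs at h <;> omega

lemma le_gapShift : t ≤ gapShift p a b L t := by
  unfold gapShift
  split_ifs <;> omega

lemma not_isGap_gapShift (hab : a ≤ b) : ¬ IsGap p a b L (gapShift p a b L t) := by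
  unfold IsGap gapShift
  split_ifs <;> omega

lemma gapShift_le_bandDim (hab : a ≤ b) (hMp1 : M (p + 1) = b)
    (ht : t ≤ bandDim (Function.update M (p + 1) a) L) : gapShift p a b L t ≤ bandDim M L := by
  unfold gapShift bandDim at *
  by_cases hL : L = p ∨ L = p + 1
  · rcases hL with rfl | rfl <;>
      simp (disch := omega) only [Function.update_of_ne, Function.update_self] at ht <;>
      split_ifs <;> omega
  · simp (disch := omega) only [Function.update_of_ne] at ht
    split_ifs <;> omega

lemma exists_gapShift_eq (hab : a ≤ b) (hMp1 : M (p + 1) = b) (hg : ¬ IsGap p a b L t)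
    (ht₁ : 1 ≤ t) (ht : t ≤ bandDim M L) :
    ∃ t', 1 ≤ t' ∧ t' ≤ bandDim (Function.update M (p + 1) a) L ∧
      gapShift p a b L t' = t := by
  unfold IsGap at hg
  unfold gapShift bandDim at *
  by_cases hL : L = p ∨ L = p + 1
  · by_cases hbt : b < t
    · refine ⟨t - (b - a), by omega, ?_, ?_⟩
      · rcases hL with rfl | rfl <;>
          simp (disch := omega) only [Function.update_of_ne, Function.update_self] <;> omega
      · rw [if_pos ⟨hL, by omega⟩]; omega
    · refine ⟨t, ht₁, ?_, ?_⟩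
      · rcases hL with rfl | rfl <;>
          simp (disch := omega) only [Function.update_of_ne, Function.update_self] <;> omega
      · rw [if_neg (by omega)]
  · refine ⟨t, ht₁, ?_, if_neg (by omega)⟩
    simp (disch := omega) only [Function.update_of_ne]
    exact ht

lemma bandEdge_gapShift_iff (hab : a ≤ b) (hMp : M p = a) (hMp1 : M (p + 1) = b)
    (hMp2 : M (p + 2) = a) :
    BandEdge n M k (gapShift p a b (k + 1) s) (gapShift p a b k t) ↔
      BandEdge n (Function.update M (p + 1) a) k s t := by
  unfold BandEdge gapShift
  obtain rfl | rfl | rfl | hk :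
      k + 1 = p ∨ k = p ∨ k = p + 1 ∨ (k + 1 ≠ p ∧ k ≠ p ∧ k ≠ p + 1) := by
    omega
  all_goals
    simp (disch := omega) only [Function.update_of_ne, Function.update_self, Nat.add_assoc,
      Nat.reduceAdd, true_or, or_true, true_and] at *
    split_ifs <;> omega

def gapShiftEmbedding (hab : a ≤ b) (hMp : M p = a) (hMp1 : M (p + 1) = b)
    (hMp2 : M (p + 2) = a) : bandUD n (Function.update M (p + 1) a) ↪g bandUD n M where
  toFun u := ⟨(u.1.1, gapShift p a b u.1.1 u.1.2), u.2.1, u.2.2.1.trans le_gapShift,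
    gapShift_le_bandDim hab hMp1 u.2.2.2⟩
  inj' u v h := by
    obtain ⟨hl, hs⟩ :
        u.1.1 = v.1.1 ∧ gapShift p a b u.1.1 u.1.2 = gapShift p a b v.1.1 v.1.2 :=
      Prod.mk.inj (congrArg Subtype.val h)
    rw [hl] at hs
    exact Subtype.ext (Prod.ext hl (gapShift_injective hab hs))
  map_rel_iff' {u v} := by
    refine bandUD_adj.trans (Iff.trans ?_ bandUD_adj.symm)
    change u.1.1 = v.1.1 + 1 ∧
        BandEdge n M v.1.1 (gapShift p a b u.1.1 u.1.2) (gapShift p a b v.1.1 v.1.2) ∨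
      v.1.1 = u.1.1 + 1 ∧
        BandEdge n M u.1.1 (gapShift p a b v.1.1 v.1.2) (gapShift p a b u.1.1 u.1.2) ↔ _
    refine or_congr (and_congr_right fun h => ?_) (and_congr_right fun h => ?_) <;>
      rw [h] <;> exact bandEdge_gapShift_iff hab hMp hMp1 hMp2

theorem card_connectedComponent_bandUD_of_peak (hpn : p < n) (hab : a ≤ b) (hMp : M p = a)
    (hMp1 : M (p + 1) = b) (hMp2 : M (p + 2) = a) :
    Nat.card (bandUD n M).ConnectedComponent =
      (b - a) + Nat.card (bandUD n (Function.update M (p + 1) a)).ConnectedComponent := by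
  let gap : Set (UDVert n (bandDim M)) := {x | IsGap p a b x.1.1 x.1.2}
  have hgap : (fun x => x.1.2) '' gap = Set.Ioc a b := by
    ext t
    refine ⟨fun ⟨x, hx, hxt⟩ => hxt ▸ hx.2, fun ht => ?_⟩
    exact ⟨⟨(p + 1, t), hpn, by simp only [Set.mem_Ioc] at ht; omega,
      by simp only [bandDim, Set.mem_Ioc] at ht ⊢; omega⟩, ⟨.inr rfl, ht⟩, rfl⟩
  rw [← Set.ncard_Ioc_nat, ← hgap]
  refine SimpleGraph.card_connectedComponent_eq_ncard_add (gapShiftEmbedding hab hMp hMp1 hMp2)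
    gap _ (fun x => ⟨fun hx => ?_, ?_⟩) (fun x y hxy hx => ?_) (fun x y hx hy hxy => ?_)
  · obtain ⟨t, ht₁, ht, hxt⟩ := exists_gapShift_eq hab hMp1 hx x.2.2.1 x.2.2.2
    exact ⟨⟨(x.1.1, t), x.2.1, ht₁, ht⟩, Subtype.ext (Prod.ext rfl hxt)⟩
  · rintro ⟨u, rfl⟩
    exact not_isGap_gapShift hab
  · rcases bandUD_adj.1 hxy with ⟨hl, he⟩ | ⟨hl, he⟩
    · obtain ⟨hk, hts⟩ := he.eq_of_isGap hMp hMp1 hMp2 (.inl (hl ▸ hx))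
      exact ⟨⟨.inl hk, hts ▸ hx.2⟩, hts.symm⟩
    · obtain ⟨hk, hts⟩ := he.eq_of_isGap hMp hMp1 hMp2 (.inr hx)
      exact ⟨⟨.inr (hl.trans (congrArg (· + 1) hk)), hts ▸ hx.2⟩, hts⟩
  · by_cases hl : x.1.1 = y.1.1
    · rw [Subtype.ext (Prod.ext hl hxy)]
    have hedge : BandEdge n M p y.1.2 y.1.2 := by
      have := hy.2
      exact ⟨hpn, .inl ⟨by omega, by omega, rfl⟩⟩
    refine (bandUD_adj.2 ?_).reachable
    rcases hx.1 with hxl | hxl <;> rcases hy.1 with hyl | hyl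
    · exact absurd (hxl.trans hyl.symm) hl
    · exact .inr ⟨by rw [hxl, hyl], by rw [hxl, hxy]; exact hedge⟩
    · exact .inl ⟨by rw [hxl, hyl], by rw [hyl, hxy]; exact hedge⟩
    · exact absurd (hxl.trans hyl.symm) hl

end Peak

end UDBand

lemma bandM_ite_eq_update {n i c : ℕ} {m : ℕ → ℕ} (hi : 1 ≤ i ∧ i ≤ n) :
    bandM n (fun j => if j = i then c else m j) = Function.update (bandM n m) i c := by
  ext j
  rw [Function.update_apply]
  split_ifs with hj
  · rw [hj, bandM, if_pos hi, if_pos rfl]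
  · simp only [bandM, if_neg hj]

theorem stmt6_general (n : ℕ) (m : ℕ → ℕ)
    (i : ℕ) (hi1 : 2 ≤ i) (hi2 : i ≤ n - 1)
    (hlt : m (i - 1) < m i) (heq : m (i - 1) = m (i + 1)) :
    NBand n m = (m i - m (i - 1)) + NBand n (fun j => if j = i then m (i + 1) else m j) := by
  obtain ⟨p, rfl⟩ : ∃ p, i = p + 1 := ⟨i - 1, by omega⟩
  simp only [Nat.add_sub_cancel] at hlt heq ⊢
  have hM {j : ℕ} (hj : 1 ≤ j ∧ j ≤ n) : bandM n m j = m j := if_pos hj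
  have hpeak := UDBand.card_connectedComponent_bandUD_of_peak (n := n) (p := p) (M := bandM n m)
    (by omega) hlt.le (hM (by omega)) (hM (by omega)) ((hM (by omega)).trans heq.symm)
  rw [← heq]
  rwa [← bandM_ite_eq_update (by omega)] at hpeak

/-- If `m i > m (i-1) = m (i+1)`, then replacing the entry `m i` by `m (i+1)` decreases
the number of connected components of the up-and-down graph by exactly `m i - m (i-1)`. -/
theorem stmt6 (n : ℕ) (hn : 3 ≤ n) (m : ℕ → ℕ)
    (hpos : ∀ i, 1 ≤ i → i ≤ n → 0 < m i)
    (i : ℕ) (hi1 : 2 ≤ i) (hi2 : i ≤ n - 1)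
    (hlt : m (i - 1) < m i) (heq : m (i - 1) = m (i + 1)) :
    NBand n m = (m i - m (i - 1)) + NBand n (fun j => if j = i then m (i + 1) else m j) :=
  stmt6_general n m i hi1 hi2 hlt heq
end

section
/- Let m_1, m_2 be positive integers. Then N([m_2,m_1]) = gcd(m_2,m_1), i.e. the up-and-down graph of the band dimension vector (m_1, m_1+m_2, m_2) for n = 2 has exactly gcd(m_2,m_1) connected components. -/
/-!
The index of a vertex modulo `g = gcd (m 2) (m 1)` is constant along edges: every edge keeps
the index or joins `β i + 1 - j` to `β (i - 1) + 1 - j`, and all `β i` are multiples of `g`.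
Conversely, each vertex is joined to the middle-level vertex with the same index, and passing
through level `0` or level `2` moves a middle index `j` to `j + m 2` or `j + m 1` whenever the
result stays in range. Together these moves realise the rotation by `m 2` of `ℤ/(m 1 + m 2)`,
whose orbits are the residue classes modulo `gcd (m 2) (m 1 + m 2) = g`. Hence the components
are in bijection with `ZMod g`.
-/

open SimpleGraph

theorem SimpleGraph.Reachable.apply_eq_of_adj {V α : Type*} {G : SimpleGraph V} {f : V → α}
    (hf : ∀ v w, G.Adj v w → f v = f w) {v w : V} (h : G.Reachable v w) : f v = f w := by
  obtain ⟨p⟩ := h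
  induction p with
  | nil => rfl
  | cons hadj _ ih => exact (hf _ _ hadj).trans ih

theorem Nat.exists_add_mul_modEq_of_modEq_gcd {a M i j : ℕ} (hM : 0 < M)
    (h : i ≡ j [MOD a.gcd M]) : ∃ t, i + a * t ≡ j [MOD M] := by
  obtain ⟨c, hc⟩ := Nat.modEq_iff_dvd.1 h
  have hbezout : ((a.gcd M : ℕ) : ℤ) = a * a.gcdA M + M * a.gcdB M := Nat.gcd_eq_gcd_ab a M
  have hM' : (M : ℤ) ≠ 0 := by exact_mod_cast hM.ne'
  refine ⟨(a.gcdA M * c % M).toNat, Int.natCast_modEq_iff.1 ?_⟩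
  push_cast [Int.toNat_of_nonneg (Int.emod_nonneg _ hM')]
  calc (i : ℤ) + a * (a.gcdA M * c % M) ≡ i + a * (a.gcdA M * c) [ZMOD M] :=
        ((Int.mod_modEq _ _).mul_left _).add_left _
    _ = j + M * (-(a.gcdB M * c)) := by linear_combination -hc - c * hbezout
    _ ≡ j [ZMOD M] := Int.modEq_add_fac_self

theorem Fin.apply_eq_apply_of_modEq_gcd {α : Type*} {p q : ℕ} (f : Fin (p + q) → α)
    (hp : ∀ (j : Fin (p + q)) (h : j + p < p + q), f ⟨j + p, h⟩ = f j)
    (hq : ∀ (j : Fin (p + q)) (h : j + q < p + q), f ⟨j + q, h⟩ = f j)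
    {i j : Fin (p + q)} (hij : (i : ℕ) ≡ j [MOD p.gcd q]) : f i = f j := by
  have hM : 0 < p + q := i.pos
  have hrot : ∀ k : Fin (p + q), f ⟨(k + q) % (p + q), Nat.mod_lt _ hM⟩ = f k := by
    intro k
    by_cases hk : k + q < p + q
    · simp only [Nat.mod_eq_of_lt hk]
      exact hq k hk
    · have hkp : (k + q) % (p + q) + p = k := by
        rw [Nat.mod_eq_sub_mod (by omega), Nat.mod_eq_of_lt (by omega)]; omega
      exact (hp ⟨_, Nat.mod_lt _ hM⟩ (by rw [Fin.val_mk]; omega)).symm.trans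
        (congrArg f (Fin.ext hkp))
  have hiter : ∀ t, f ⟨(i + q * t) % (p + q), Nat.mod_lt _ hM⟩ = f i := by
    intro t
    induction t with
    | zero => simp [Nat.mod_eq_of_lt i.isLt]
    | succ t ih =>
      refine (congrArg f (Fin.ext ?_)).trans ((hrot _).trans ih)
      simp only [Nat.mod_add_mod, mul_add, mul_one, add_assoc]
  have hgcd : p.gcd q = q.gcd (p + q) := by
    rw [Nat.gcd_comm, Nat.gcd_add_self_right]
  obtain ⟨t, ht⟩ := Nat.exists_add_mul_modEq_of_modEq_gcd hM (hgcd ▸ hij)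
  rw [← hiter t]
  congr 2
  rw [ht, Nat.mod_eq_of_lt j.isLt]

namespace UDGraph

variable {n : ℕ} {β r s : ℕ → ℕ}

theorem adj_of_straight {v w : UDVert n β} {i j : ℕ} (hi : 1 ≤ i) (hin : i ≤ n)
    (hj : 1 ≤ j) (hjrs : j ≤ if Even (n - i) then r i else s i) (hv : v.1 = (i, j))
    (hw : w.1 = (i - 1, j)) : (UDGraph n β r s).Adj v w := by
  refine ⟨fun hvw => by simp [hvw, hw] at hv; omega, ?_⟩
  split_ifs at hjrs with hpar
  · exact Or.inl ⟨i, j, hi, hin, hj, hjrs, Or.inl ⟨hpar, Or.inl ⟨hv, hw⟩⟩⟩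
  · exact Or.inr ⟨i, j, hi, hin, hj, hjrs, Or.inl ⟨hpar, Or.inl ⟨hv, hw⟩⟩⟩

theorem adj_of_crossed {v w : UDVert n β} {i j : ℕ} (hi : 1 ≤ i) (hin : i ≤ n)
    (hj : 1 ≤ j) (hjrs : j ≤ if Even (n - i) then s i else r i) (hv : v.1 = (i, β i + 1 - j))
    (hw : w.1 = (i - 1, β (i - 1) + 1 - j)) : (UDGraph n β r s).Adj v w := by
  refine ⟨fun hvw => by simp [hvw, hw] at hv; omega, ?_⟩
  split_ifs at hjrs with hpar
  · exact Or.inr ⟨i, j, hi, hin, hj, hjrs, Or.inr ⟨hpar, Or.inl ⟨hv, hw⟩⟩⟩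
  · exact Or.inl ⟨i, j, hi, hin, hj, hjrs, Or.inr ⟨hpar, Or.inl ⟨hv, hw⟩⟩⟩

theorem index_cast_eq_of_adj {d : ℕ} (hβ : ∀ i ≤ n, d ∣ β i) {v w : UDVert n β}
    (h : (UDGraph n β r s).Adj v w) : (v.1.2 : ZMod d) = w.1.2 := by
  have hcrossed : ∀ {k j : ℕ} {x : UDVert n β}, x.1 = (k, β k + 1 - j) →
      (x.1.2 : ZMod d) = 1 - j := by
    intro k j x hx
    obtain ⟨hk, hx1, -⟩ := x.2
    rw [hx] at hk hx1
    rw [hx, Nat.cast_sub (by omega), Nat.cast_add, (ZMod.natCast_eq_zero_iff _ _).2 (hβ k hk),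
      zero_add, Nat.cast_one]
  obtain ⟨-, ⟨i, j, -, -, -, -, hc⟩ | ⟨i, j, -, -, -, -, hc⟩⟩ := h <;>
    rcases hc with ⟨-, ⟨hv, hw⟩ | ⟨hw, hv⟩⟩ | ⟨-, ⟨hv, hw⟩ | ⟨hw, hv⟩⟩ <;>
    first | rw [hcrossed hv, hcrossed hw] | rw [hv, hw]

end UDGraph

theorem dvd_bandBeta {d n : ℕ} {m : ℕ → ℕ} (hm : ∀ k, 1 ≤ k → k ≤ n → d ∣ m k)
    (i : ℕ) : d ∣ bandBeta n m i := by
  have hbandM : ∀ k, d ∣ bandM n m k := fun k => by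
    unfold bandM
    split_ifs with hk
    exacts [hm k hk.1 hk.2, dvd_zero d]
  exact dvd_add (hbandM i) (hbandM (i + 1))

theorem bandGraph.index_cast_eq_of_reachable {d n : ℕ} {m : ℕ → ℕ}
    (hm : ∀ k, 1 ≤ k → k ≤ n → d ∣ m k) {v w : UDVert n (bandBeta n m)}
    (h : (bandGraph n m).Reachable v w) : (v.1.2 : ZMod d) = w.1.2 :=
  h.apply_eq_of_adj fun _ _ => UDGraph.index_cast_eq_of_adj fun i _ => dvd_bandBeta hm i

section BandTwo

variable {m : ℕ → ℕ}

@[simp] theorem bandM_two_one : bandM 2 m 1 = m 1 := by simp [bandM]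
@[simp] theorem bandM_two_two : bandM 2 m 2 = m 2 := by simp [bandM]
@[simp] theorem bandBeta_two_zero : bandBeta 2 m 0 = m 1 := by simp [bandBeta, bandM]
@[simp] theorem bandBeta_two_one : bandBeta 2 m 1 = m 1 + m 2 := by simp [bandBeta, bandM]
@[simp] theorem bandBeta_two_two : bandBeta 2 m 2 = m 2 := by simp [bandBeta, bandM]

variable (m) in
def midVertex (j : Fin (m 1 + m 2)) : UDVert 2 (bandBeta 2 m) :=
  ⟨(1, j + 1), by norm_num, by omega, by simp only [bandBeta_two_one]; omega⟩

theorem reachable_midVertex_add_m_one (j : Fin (m 1 + m 2)) (h : j + m 1 < m 1 + m 2) :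
    (bandGraph 2 m).Reachable (midVertex m ⟨j + m 1, h⟩) (midVertex m j) := by
  let u : UDVert 2 (bandBeta 2 m) :=
    ⟨(2, j + 1), le_rfl, by omega, by simp only [bandBeta_two_two]; omega⟩
  have hcrossed : (bandGraph 2 m).Adj u (midVertex m ⟨j + m 1, h⟩) :=
    UDGraph.adj_of_crossed (i := 2) (j := m 2 - j) one_le_two le_rfl (by omega) (by simp)
      (by simp [u]; omega) (by simp [midVertex]; omega)
  have hstraight : (bandGraph 2 m).Adj u (midVertex m j) :=
    UDGraph.adj_of_straight one_le_two le_rfl (by omega) (by simp; omega) rfl rfl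
  exact hcrossed.symm.reachable.trans hstraight.reachable

theorem reachable_midVertex_add_m_two (j : Fin (m 1 + m 2)) (h : j + m 2 < m 1 + m 2) :
    (bandGraph 2 m).Reachable (midVertex m ⟨j + m 2, h⟩) (midVertex m j) := by
  let u : UDVert 2 (bandBeta 2 m) :=
    ⟨(0, j + 1), by norm_num, by omega, by simp only [bandBeta_two_zero]; omega⟩
  have hcrossed : (bandGraph 2 m).Adj (midVertex m ⟨j + m 2, h⟩) u :=
    UDGraph.adj_of_crossed (i := 1) (j := m 1 - j) le_rfl one_le_two (by omega) (by simp)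
      (by simp [midVertex]; omega) (by simp [u]; omega)
  have hstraight : (bandGraph 2 m).Adj (midVertex m j) u :=
    UDGraph.adj_of_straight le_rfl one_le_two (by omega) (by simp; omega) rfl rfl
  exact hcrossed.reachable.trans hstraight.symm.reachable

theorem exists_midVertex_reachable (v : UDVert 2 (bandBeta 2 m)) :
    ∃ j, (bandGraph 2 m).Reachable (midVertex m j) v ∧ v.1.2 = j + 1 := by
  obtain ⟨⟨i, k⟩, hi, hk1, hk⟩ := v
  have hlt : k - 1 < m 1 + m 2 := by interval_cases i <;> simp at hk <;> omega
  refine ⟨⟨k - 1, hlt⟩, ?_, by simp; omega⟩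
  interval_cases i
  · exact (UDGraph.adj_of_straight le_rfl one_le_two hk1 (by simpa using hk)
      (by simp [midVertex]; omega) rfl).reachable
  · have hv : midVertex m ⟨k - 1, hlt⟩ = ⟨(1, k), hi, hk1, hk⟩ :=
      Subtype.ext (by simp [midVertex]; omega)
    exact hv ▸ Reachable.refl _
  · exact (UDGraph.adj_of_straight one_le_two le_rfl hk1 (by simpa using hk) rfl
      (by simp [midVertex]; omega)).symm.reachable

theorem bandGraph_two_reachable_of_modEq {v w : UDVert 2 (bandBeta 2 m)}
    (h : v.1.2 ≡ w.1.2 [MOD (m 2).gcd (m 1)]) : (bandGraph 2 m).Reachable v w := by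
  obtain ⟨a, hav, ha⟩ := exists_midVertex_reachable v
  obtain ⟨b, hbw, hb⟩ := exists_midVertex_reachable w
  rw [ha, hb, Nat.gcd_comm] at h
  have hab := Fin.apply_eq_apply_of_modEq_gcd
    ((bandGraph 2 m).connectedComponentMk ∘ midVertex m)
    (fun j hj => ConnectedComponent.sound (reachable_midVertex_add_m_one j hj))
    (fun j hj => ConnectedComponent.sound (reachable_midVertex_add_m_two j hj))
    (Nat.ModEq.add_right_cancel' 1 h)
  exact hav.symm.trans ((ConnectedComponent.exact hab).trans hbw)

end BandTwo

theorem stmt7_general (m : ℕ → ℕ) (h1 : 0 < m 1) :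
    NBand 2 m = Nat.gcd (m 2) (m 1) := by
  set g := Nat.gcd (m 2) (m 1)
  have : NeZero g := ⟨(Nat.gcd_pos_of_pos_right _ h1).ne'⟩
  have hdvd : ∀ k, 1 ≤ k → k ≤ 2 → g ∣ m k := by
    intro k hk1 hk2
    interval_cases k
    exacts [Nat.gcd_dvd_right _ _, Nat.gcd_dvd_left _ _]
  let φ : (bandGraph 2 m).ConnectedComponent → ZMod g :=
    Quot.lift (fun v => (v.1.2 : ZMod g)) fun _ _ => bandGraph.index_cast_eq_of_reachable hdvd
  have hφ : Function.Bijective φ := by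
    refine ⟨ConnectedComponent.ind₂ fun v w hvw => ConnectedComponent.sound
      (bandGraph_two_reachable_of_modEq ((ZMod.natCast_eq_natCast_iff _ _ _).1 hvw)), fun c => ?_⟩
    have hlt : (c - 1).val < m 1 + m 2 :=
      (c - 1).val_lt.trans_le
        ((Nat.le_of_dvd h1 (Nat.gcd_dvd_right _ _)).trans (Nat.le_add_right _ _))
    refine ⟨(bandGraph 2 m).connectedComponentMk (midVertex m ⟨_, hlt⟩), ?_⟩
    show (((c - 1).val + 1 : ℕ) : ZMod g) = c
    rw [Nat.cast_succ, ZMod.natCast_zmod_val, sub_add_cancel]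
  rw [NBand, Nat.card_eq_of_bijective φ hφ, Nat.card_zmod]

/-- For `n = 2`, the up-and-down graph of the band dimension vector
`(m 1, m 1 + m 2, m 2)` has exactly `gcd (m 2) (m 1)` connected components. -/
theorem stmt7 (m : ℕ → ℕ) (h1 : 0 < m 1) (h2 : 0 < m 2) :
    NBand 2 m = Nat.gcd (m 2) (m 1) :=
  stmt7_general m h1
end

section
/- Let m_1, m_2, m_3 be positive integers. Then N([m_3,m_2,m_1]) = gcd(m_2, |m_3 − m_1|), i.e. the up-and-down graph of the band dimension vector (m_1, m_1+m_2, m_2+m_3, m_3) for n = 3 has exactly gcd(m_2, |m_3 − m_1|) connected components (with the convention gcd(m_2,0) = m_2). -/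
/-!
Every edge of `Γ([m₃, m₂, m₁])` either keeps the index `j` of its endpoints or shifts it by
`m₂` or by `m₃ - m₁`, so `j mod g`, with `g = gcd(m₂, m₃ - m₁)`, is constant on components.
Conversely, going down and back up through level `0` or level `3` shifts `j` by `m₂`, so every
vertex is connected to a vertex `(1, s)` with `1 ≤ s ≤ m₂` and `s ≡ j (mod m₂)`; and the red
edges between levels `1` and `2` connect `(1, s)` to `(1, s')` with `s' ≡ s + m₃ - m₁ (mod m₂)`.
By Bézout the multiples of `m₃ - m₁` modulo `m₂` are exactly the multiples of `g`, so vertices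
with the same `j mod g` are connected.
-/

namespace SimpleGraph

variable {V α : Type*} {G : SimpleGraph V}

theorem Reachable.apply_eq_of_adj_s8 {f : V → α} (hf : ∀ x y, G.Adj x y → f x = f y) {x y : V}
    (h : G.Reachable x y) : f x = f y := by
  obtain ⟨p⟩ := h
  induction p with
  | nil => rfl
  | cons hadj _ ih => exact (hf _ _ hadj).trans ih

theorem card_connectedComponent_eq_of_reachable_iff (f : V → α)
    (hf : ∀ x y, G.Reachable x y ↔ f x = f y) (hsurj : Function.Surjective f) :
    Nat.card G.ConnectedComponent = Nat.card α := by
  refine Nat.card_eq_of_bijective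
    (ConnectedComponent.lift f fun v w p _ => (hf v w).1 p.reachable) ⟨fun c d => ?_, fun a => ?_⟩
  · induction c, d using ConnectedComponent.ind₂ with
    | h v w => simp [hf]
  · obtain ⟨v, rfl⟩ := hsurj a
    exact ⟨G.connectedComponentMk v, rfl⟩

-- Reachability read on underlying elements, so that vertices can be named by their index
-- pairs without carrying membership proofs around.
def ValReachable {P : α → Prop} (G : SimpleGraph (Subtype P)) (p q : α) : Prop :=
  ∃ (hp : P p) (hq : P q), G.Reachable ⟨p, hp⟩ ⟨q, hq⟩

section Subtype

variable {P : α → Prop} {G : SimpleGraph (Subtype P)} {p q r : α}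

theorem valReachable_iff {x y : Subtype P} : G.ValReachable x.1 y.1 ↔ G.Reachable x y :=
  ⟨fun ⟨_, _, h⟩ => h, fun h => ⟨x.2, y.2, h⟩⟩

namespace ValReachable

theorem refl (hp : P p) : G.ValReachable p p := ⟨hp, hp, .rfl⟩

theorem symm (h : G.ValReachable p q) : G.ValReachable q p :=
  let ⟨hp, hq, h⟩ := h; ⟨hq, hp, h.symm⟩

theorem trans (h : G.ValReachable p q) (h' : G.ValReachable q r) : G.ValReachable p r :=
  let ⟨hp, _, h⟩ := h; let ⟨_, hr, h'⟩ := h'; ⟨hp, hr, h.trans h'⟩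

theorem of_adj {hp : P p} {hq : P q} (h : G.Adj ⟨p, hp⟩ ⟨q, hq⟩) : G.ValReachable p q :=
  ⟨hp, hq, h.reachable⟩

end ValReachable

end Subtype

end SimpleGraph

namespace ZMod

variable {n : ℕ}

/-- The representative of `a` in `1, …, n`. -/
def posRep (a : ZMod n) : ℕ := (a - 1).val + 1

theorem one_le_posRep (a : ZMod n) : 1 ≤ a.posRep := Nat.le_add_left 1 _

theorem posRep_le [NeZero n] (a : ZMod n) : a.posRep ≤ n := (a - 1).val_lt

@[simp]
theorem natCast_posRep [NeZero n] (a : ZMod n) : (a.posRep : ZMod n) = a := by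
  simp [posRep]

theorem posRep_natCast {j : ℕ} (h1 : 1 ≤ j) (h2 : j ≤ n) : (j : ZMod n).posRep = j := by
  obtain ⟨k, rfl⟩ := Nat.exists_eq_add_of_le' h1
  simp [posRep, val_cast_of_lt (show k < n by omega)]

theorem exists_natCast_mul_eq_of_gcd_dvd [NeZero n] {d x : ℤ} (h : (Int.gcd n d : ℤ) ∣ x) :
    ∃ N : ℕ, (x : ZMod n) = N * d := by
  obtain ⟨w, rfl⟩ := h
  refine ⟨(Int.gcdB n d * w : ZMod n).val, ?_⟩
  rw [Int.gcd_eq_gcd_ab]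
  push_cast
  rw [natCast_zmod_val, ZMod.natCast_self]
  ring

end ZMod

section BandGraph

variable {n : ℕ} {m : ℕ → ℕ} {i : ℕ}

theorem bandM_of_mem (hi : 1 ≤ i) (hin : i ≤ n) : bandM n m i = m i := if_pos ⟨hi, hin⟩

theorem bandBeta_sub_one_add_one (hi : 1 ≤ i) :
    bandBeta n m (i - 1) = bandM n m (i - 1) + bandM n m i := by
  rw [bandBeta, Nat.sub_add_cancel hi]

theorem bandGraph_valReachable_straight {j : ℕ} (hi : 1 ≤ i) (hin : i ≤ n) (hj : 1 ≤ j)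
    (hjm : j ≤ m i) : (bandGraph n m).ValReachable (i, j) (i - 1, j) := by
  have hm : bandM n m i = m i := bandM_of_mem hi hin
  refine .of_adj (hp := ⟨hin, hj, ?_⟩) (hq := ⟨by omega, hj, ?_⟩)
    ⟨ne_of_apply_ne (·.1.1) (by dsimp only; omega), ?_⟩
  · simp only [bandBeta]; omega
  · simp only [bandBeta_sub_one_add_one hi]; omega
  by_cases hpar : Even (n - i)
  · exact .inl ⟨i, j, hi, hin, hj, hm ▸ hjm, .inl ⟨hpar, .inl ⟨rfl, rfl⟩⟩⟩
  · exact .inr ⟨i, j, hi, hin, hj, hm ▸ hjm, .inl ⟨hpar, .inl ⟨rfl, rfl⟩⟩⟩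

-- The edges `e^(i)_{β i + 1 - j} — e^(i-1)_{β (i-1) + 1 - j}`, `j ≤ m i`, reindexed by
-- `k = m i + 1 - j`.
theorem bandGraph_valReachable_flip {k : ℕ} (hi : 1 ≤ i) (hin : i ≤ n) (hk : 1 ≤ k)
    (hkm : k ≤ m i) :
    (bandGraph n m).ValReachable (i, bandM n m (i + 1) + k) (i - 1, bandM n m (i - 1) + k) := by
  have hm : bandM n m i = m i := bandM_of_mem hi hin
  have hβ : bandBeta n m i + 1 - (m i + 1 - k) = bandM n m (i + 1) + k := by
    simp only [bandBeta]; omega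
  have hβ' : bandBeta n m (i - 1) + 1 - (m i + 1 - k) = bandM n m (i - 1) + k := by
    rw [bandBeta_sub_one_add_one hi]; omega
  refine .of_adj (hp := ⟨hin, by omega, ?_⟩) (hq := ⟨by omega, by omega, ?_⟩)
    ⟨ne_of_apply_ne (·.1.1) (by dsimp only; omega), ?_⟩
  · simp only [bandBeta]; omega
  · simp only [bandBeta_sub_one_add_one hi]; omega
  have hj : m i + 1 - k ≤ bandM n m i := by omega
  by_cases hpar : Even (n - i)
  · exact .inr ⟨i, _, hi, hin, by omega, hj,
      .inr ⟨hpar, .inl ⟨by rw [hβ], by rw [hβ']⟩⟩⟩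
  · exact .inl ⟨i, _, hi, hin, by omega, hj,
      .inr ⟨hpar, .inl ⟨by rw [hβ], by rw [hβ']⟩⟩⟩

theorem bandGraph_adj_natCast_eq {R : Type*} [AddMonoidWithOne R]
    (hm : ∀ i, 1 ≤ i → i ≤ n → (bandM n m (i + 1) : R) = bandM n m (i - 1))
    {x y : UDVert n (bandBeta n m)} (hxy : (bandGraph n m).Adj x y) :
    (x.1.2 : R) = y.1.2 := by
  suffices key : ∀ i j, 1 ≤ i → i ≤ n → j ≤ bandM n m i →
      ((bandBeta n m i + 1 - j : ℕ) : R) = (bandBeta n m (i - 1) + 1 - j : ℕ) by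
    obtain ⟨-, ⟨i, j, hi, hin, -, hj, hxy⟩ | ⟨i, j, hi, hin, -, hj, hxy⟩⟩ := hxy <;>
    obtain ⟨-, ⟨hx, hy⟩ | ⟨hy, hx⟩⟩ | ⟨-, ⟨hx, hy⟩ | ⟨hy, hx⟩⟩ := hxy <;>
    simp [hx, hy, key i j hi hin hj]
  intro i j hi hin hj
  have h₁ : bandBeta n m i + 1 - j = (bandM n m i + 1 - j) + bandM n m (i + 1) := by
    simp only [bandBeta]; omega
  have h₂ : bandBeta n m (i - 1) + 1 - j = (bandM n m i + 1 - j) + bandM n m (i - 1) := by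
    rw [bandBeta_sub_one_add_one hi]; omega
  rw [h₁, h₂, Nat.cast_add, Nat.cast_add, hm i hi hin]

end BandGraph

theorem SimpleGraph.valReachable_posRep_of_shift {P : ℕ × ℕ → Prop}
    {G : SimpleGraph (Subtype P)} {c : ℕ} [NeZero c] {i i' b : ℕ}
    (hshift : ∀ k, 1 ≤ k → k ≤ b → G.ValReachable (i, c + k) (i, k))
    (hbase : ∀ u, 1 ≤ u → u ≤ c → G.ValReachable (i, u) (i', u)) :
    ∀ u, 1 ≤ u → u ≤ c + b → G.ValReachable (i, u) (i', (u : ZMod c).posRep) := by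
  intro u
  induction u using Nat.strong_induction_on with
  | _ u ih =>
    intro hu hub
    by_cases huc : u ≤ c
    · rw [ZMod.posRep_natCast hu huc]
      exact hbase u hu huc
    · have hc := NeZero.pos c
      obtain ⟨k, rfl⟩ := Nat.exists_eq_add_of_lt (not_le.mp huc)
      have hk := hshift (k + 1) (by omega) (by omega)
      rw [← add_assoc] at hk
      simpa using hk.trans (ih (k + 1) (by omega) (by omega) (by omega))

section Three

variable {m : ℕ → ℕ} [NeZero (m 2)]

theorem bandGraph_three_valReachable_level_one {u : ℕ} (hu : 1 ≤ u) (hum : u ≤ m 1 + m 2) :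
    (bandGraph 3 m).ValReachable (1, u) (1, (u : ZMod (m 2)).posRep) := by
  refine SimpleGraph.valReachable_posRep_of_shift (b := m 1) (fun k hk hkm => ?_)
    (fun u hu hum => .refl ⟨by norm_num, hu, ?_⟩) u hu (by omega)
  · have hflip := bandGraph_valReachable_flip (n := 3) (m := m) (i := 1) le_rfl (by norm_num)
      hk hkm
    have hstraight := bandGraph_valReachable_straight (n := 3) (m := m) le_rfl (by norm_num)
      hk hkm
    norm_num [bandM] at hflip hstraight
    simpa using hflip.trans hstraight.symm
  · simp [bandBeta, bandM]; omega

theorem bandGraph_three_valReachable_level_two {u : ℕ} (hu : 1 ≤ u) (hum : u ≤ m 2 + m 3) :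
    (bandGraph 3 m).ValReachable (2, u) (1, (u : ZMod (m 2)).posRep) := by
  refine SimpleGraph.valReachable_posRep_of_shift (b := m 3) (fun k hk hkm => ?_)
    (fun u hu hum => ?_) u hu hum
  · have hflip := bandGraph_valReachable_flip (n := 3) (m := m) (i := 3) (by norm_num) le_rfl
      hk hkm
    have hstraight := bandGraph_valReachable_straight (n := 3) (m := m) (i := 3) (by norm_num)
      le_rfl hk hkm
    norm_num [bandM] at hflip hstraight
    simpa using hflip.symm.trans hstraight
  · simpa using bandGraph_valReachable_straight (n := 3) (m := m) (i := 2) (by norm_num)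
      (by norm_num) hu hum

theorem bandGraph_three_valReachable_posRep (x : UDVert 3 (bandBeta 3 m)) :
    (bandGraph 3 m).ValReachable x.1 (1, (x.1.2 : ZMod (m 2)).posRep) := by
  obtain ⟨⟨i, j⟩, hi, hj, hjβ⟩ := x
  interval_cases i <;> norm_num [bandBeta, bandM] at hjβ ⊢
  · exact (bandGraph_valReachable_straight le_rfl (by norm_num) hj hjβ).symm.trans
      (bandGraph_three_valReachable_level_one hj (by omega))
  · exact bandGraph_three_valReachable_level_one hj hjβ
  · exact bandGraph_three_valReachable_level_two hj hjβ
  · exact (bandGraph_valReachable_straight (by norm_num) le_rfl hj hjβ).trans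
      (bandGraph_three_valReachable_level_two hj (by omega))

theorem bandGraph_three_valReachable_posRep_add (a : ZMod (m 2)) :
    (bandGraph 3 m).ValReachable (1, a.posRep) (1, (a + m 3 - m 1).posRep) := by
  set k := (a - m 1).posRep
  have hk := (a - m 1).one_le_posRep
  have hkm := (a - m 1).posRep_le
  have hflip := bandGraph_valReachable_flip (n := 3) (m := m) (i := 2) (by norm_num) (by norm_num)
    hk hkm
  norm_num [bandM] at hflip
  have hleft := bandGraph_three_valReachable_level_one (m := m) (u := m 1 + k) (by omega)
    (by omega)
  have hright := bandGraph_three_valReachable_level_two (m := m) (u := m 3 + k) (by omega)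
    (by omega)
  simp only [Nat.cast_add, ZMod.natCast_posRep, k] at hleft hright
  rw [add_sub_cancel] at hleft
  rw [show m 3 + (a - m 1) = a + m 3 - m 1 by ring] at hright
  exact hleft.symm.trans (hflip.symm.trans hright)

theorem bandGraph_three_valReachable_posRep_add_mul (a : ZMod (m 2)) (N : ℕ) :
    (bandGraph 3 m).ValReachable (1, a.posRep) (1, (a + N * (m 3 - m 1)).posRep) := by
  induction N with
  | zero =>
    have := a.posRep_le
    simpa using .refl ⟨by norm_num, a.one_le_posRep, by simp [bandBeta, bandM]; omega⟩
  | succ N ih =>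
    have h := bandGraph_three_valReachable_posRep_add (m := m) (a + N * (m 3 - m 1))
    rw [show a + N * (m 3 - m 1) + m 3 - m 1 = a + (N + 1 : ℕ) * (m 3 - m 1) by push_cast; ring]
      at h
    exact ih.trans h

theorem bandGraph_three_reachable_of_dvd {x y : UDVert 3 (bandBeta 3 m)}
    (h : (Int.gcd (m 2) ((m 3 : ℤ) - m 1) : ℤ) ∣ (y.1.2 : ℤ) - x.1.2) :
    (bandGraph 3 m).Reachable x y := by
  obtain ⟨N, hN⟩ := ZMod.exists_natCast_mul_eq_of_gcd_dvd h
  have hy : (y.1.2 : ZMod (m 2)) = x.1.2 + N * (m 3 - m 1) := by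
    push_cast at hN
    rw [← hN]
    ring
  refine SimpleGraph.valReachable_iff.mp ((bandGraph_three_valReachable_posRep x).trans ?_)
  refine (bandGraph_three_valReachable_posRep_add_mul _ N).trans ?_
  exact hy ▸ (bandGraph_three_valReachable_posRep y).symm

end Three

theorem Int.gcd_natCast_sub_natCast (a b c : ℕ) :
    Int.gcd a ((b : ℤ) - c) = Nat.gcd a (Nat.dist b c) := by
  rw [Int.gcd, Int.natAbs_natCast, Nat.dist]
  congr 1
  omega

theorem stmt8_general (m : ℕ → ℕ) (h2 : 0 < m 2) :
    NBand 3 m = Nat.gcd (m 2) (Nat.dist (m 3) (m 1)) := by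
  have : NeZero (m 2) := ⟨h2.ne'⟩
  rw [← Int.gcd_natCast_sub_natCast, NBand]
  set g := Int.gcd (m 2) ((m 3 : ℤ) - m 1)
  have : NeZero g := ⟨(Int.gcd_pos_of_ne_zero_left _ (by exact_mod_cast h2.ne')).ne'⟩
  have hg2 : g ∣ m 2 := Int.natCast_dvd_natCast.mp (Int.gcd_dvd_left ..)
  have hm2 : ((m 2 : ℕ) : ZMod g) = 0 := (ZMod.natCast_eq_zero_iff _ _).mpr hg2
  have hm31 : ((m 3 : ℕ) : ZMod g) = m 1 := by
    rw [← Int.cast_natCast, ← Int.cast_natCast (m 1), eq_comm,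
      ZMod.intCast_eq_intCast_iff_dvd_sub]
    exact Int.gcd_dvd_right ..
  rw [← Nat.card_zmod g]
  refine SimpleGraph.card_connectedComponent_eq_of_reachable_iff (fun x => (x.1.2 : ZMod g))
    (fun x y => ⟨fun h => h.apply_eq_of_adj_s8 fun _ _ => bandGraph_adj_natCast_eq ?_,
      fun h => ?_⟩)
    fun z => ⟨⟨(1, z.posRep), by norm_num, z.one_le_posRep, ?_⟩, by simp⟩
  · intro i hi hi3
    interval_cases i <;> simp [bandM, hm2, hm31]
  · refine bandGraph_three_reachable_of_dvd ?_
    rwa [← ZMod.intCast_eq_intCast_iff_dvd_sub, Int.cast_natCast, Int.cast_natCast]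
  · have := z.posRep_le
    have := Nat.le_of_dvd h2 hg2
    simp [bandBeta, bandM]
    omega

/-- For `n = 3`, the up-and-down graph of the band dimension vector
`(m 1, m 1 + m 2, m 2 + m 3, m 3)` has exactly `gcd (m 2) |m 3 - m 1|` connected
components. -/
theorem stmt8 (m : ℕ → ℕ) (h1 : 0 < m 1) (h2 : 0 < m 2) (h3 : 0 < m 3) :
    NBand 3 m = Nat.gcd (m 2) (Nat.dist (m 3) (m 1)) :=
  stmt8_general m h2
end

section
/- Let β = (β_0,…,β_n), r = (r_1,…,r_n), s = (s_1,…,s_n) be nonnegative integer sequences with r_i + r_{i+1} ≤ β_i and s_i + s_{i+1} ≤ β_i for all 0 ≤ i ≤ n (conventions r_0 = r_{n+1} = s_0 = s_{n+1} = 0). Assume Σ_{i=0}^n (−1)^i β_i = ±1, that r_i + r_{i+1} = β_i for all indices 0 ≤ i ≤ n except exactly one, and that s_i + s_{i+1} = β_i for all indices except exactly one. Then the up-and-down graph Γ(β;r,s) has exactly one vertex that is not incident to a red edge and exactly one vertex that is not incident to a blue edge, every other vertex is incident to exactly one red and exactly one blue edge, and the two exceptional vertices lie in the same connected component of Γ(β;r,s);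 consequently exactly one connected component of Γ(β;r,s) is a string (path) and all remaining components are bands (cycles). -/
/-!
In each row `i` of the up-and-down graph, the edges of one colour going down to row `i - 1`
start at the first `r i` positions counted from one end of the row, and those going up start at
the first `r (i + 1)` positions counted from the other end; which end is which alternates with
the parity of `n - i`. Hence each colour is a matching, and a row is covered exactly when
`r i + r (i + 1) = β i`. Telescoping shows that the alternating sum of the `β i` is `±` the
defect of the one exceptional row, so the defect is `1` and each colour misses exactly one
vertex.

Let `ρ` and `σ` be the red and blue partner involutions and `u` the red-free vertex. The orbit
of `u` under `σ ∘ ρ` is a cycle which `ρ` reflects about `u`. As `ρ` fixes no other point,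
the cycle has odd length, so `σ` fixes a point of it: the blue-free vertex.
-/

namespace UpDownGraph

open Function Finset

section Matching

variable {V : Type*}

theorem reachable_of_involutive [Finite V] (G : SimpleGraph V) {ρ σ : V → V}
    (hρ : Involutive ρ) (hσ : Involutive σ)
    (hρG : ∀ v, ρ v ≠ v → G.Adj v (ρ v)) (hσG : ∀ v, σ v ≠ v → G.Adj v (σ v))
    {u w : V} (hu : ∀ v, ρ v = v ↔ v = u) (hw : ∀ v, σ v = v → v = w) :
    G.Reachable u w := by
  set φ := σ ∘ ρ
  have hreach_apply (τ : V → V) (hτ : ∀ v, τ v ≠ v → G.Adj v (τ v)) (x : V) :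
      G.Reachable x (τ x) := by
    by_cases hx : τ x = x
    · rw [hx]
    · exact (hτ x hx).reachable
  have hreach (k : ℕ) : G.Reachable u (φ^[k] u) := by
    induction k with
    | zero => rfl
    | succ k ih =>
      rw [iterate_succ_apply']
      exact ih.trans <| (hreach_apply ρ hρG _).trans (hreach_apply σ hσG _)
  -- `ρ` conjugates `φ` into its inverse `ρ ∘ σ`
  have hinv (k : ℕ) (x : V) : (ρ ∘ σ)^[k] (φ^[k] x) = x :=
    LeftInverse.iterate (fun x => by simp only [φ, comp_apply, hσ _, hρ _]) k x
  have hconj (k : ℕ) (x : V) : ρ (φ^[k] x) = (ρ ∘ σ)^[k] (ρ x) :=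
    Semiconj.iterate_right (f := ρ) (ga := φ) (gb := ρ ∘ σ) (fun _ => rfl) k x
  have hρu : ρ u = u := (hu u).2 rfl
  set d := minimalPeriod φ u
  have hd : 0 < d :=
    minimalPeriod_pos_of_mem_periodicPts ((hσ.injective.comp hρ.injective).mem_periodicPts u)
  have hφd : φ^[d] u = u := iterate_minimalPeriod
  obtain ⟨k, hk⟩ | ⟨k, hk⟩ := Nat.even_or_odd d
  · have hkk : φ^[k] (φ^[k] u) = u := by rw [← iterate_add_apply, ← hk, hφd]
    have hfix : ρ (φ^[k] u) = φ^[k] u := by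
      calc ρ (φ^[k] u) = (ρ ∘ σ)^[k] u := by rw [hconj, hρu]
        _ = (ρ ∘ σ)^[k] (φ^[k] (φ^[k] u)) := by rw [hkk]
        _ = φ^[k] u := hinv k _
    have hk_le : d ≤ k := IsPeriodicPt.minimalPeriod_le (by omega) ((hu _).1 hfix)
    omega
  · have hkk : φ^[k + 1] (φ^[k] u) = u := by
      rw [← iterate_add_apply, show k + 1 + k = d by omega, hφd]
    have hfix : σ (φ^[k + 1] u) = φ^[k + 1] u := by
      calc σ (φ^[k + 1] u) = φ (ρ (φ^[k + 1] u)) := by simp only [φ, comp_apply, hρ _]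
        _ = φ ((ρ ∘ σ)^[k + 1] (φ^[k + 1] (φ^[k] u))) := by rw [hconj, hρu, hkk]
        _ = φ^[k + 1] u := by rw [hinv, iterate_succ_apply']
    exact hw _ hfix ▸ hreach (k + 1)

structure IsNearPerfectMatching (A : V → V → Prop) (u : V) : Prop where
  symm {p q : V} : A p q → A q p
  irrefl (p : V) : ¬ A p p
  unique {p q q' : V} : A p q → A p q' → q = q'
  exists_iff (p : V) : (∃ q, A p q) ↔ p ≠ u

open Classical in
noncomputable def partner (A : V → V → Prop) (p : V) : V :=
  if h : ∃ q, A p q then h.choose else p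

namespace IsNearPerfectMatching

variable {A : V → V → Prop} {u : V}

theorem not_exists (hA : IsNearPerfectMatching A u) : ¬ ∃ q, A u q :=
  fun h => (hA.exists_iff u).1 h rfl

theorem eq_of_not_exists (hA : IsNearPerfectMatching A u) {p : V} (h : ¬ ∃ q, A p q) :
    p = u :=
  not_not.1 (mt (hA.exists_iff p).2 h)

theorem existsUnique (hA : IsNearPerfectMatching A u) {p : V} (hp : p ≠ u) : ∃! q, A p q :=
  let ⟨q, hq⟩ := (hA.exists_iff p).2 hp
  ⟨q, hq, fun _ hq' => hA.unique hq' hq⟩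

theorem adj_partner (hA : IsNearPerfectMatching A u) {p : V} (hp : p ≠ u) :
    A p (partner A p) := by
  have h := (hA.exists_iff p).2 hp
  rw [partner, dif_pos h]
  exact h.choose_spec

theorem partner_eq_self_iff (hA : IsNearPerfectMatching A u) (p : V) :
    partner A p = p ↔ p = u := by
  refine ⟨fun h => by_contra fun hp => hA.irrefl p ?_, fun h => ?_⟩
  · simpa [h] using hA.adj_partner hp
  · rw [partner, dif_neg (h ▸ hA.not_exists)]

theorem partner_involutive (hA : IsNearPerfectMatching A u) : Involutive (partner A) := by
  intro p
  by_cases hp : p = u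
  · rw [(hA.partner_eq_self_iff p).2 hp, (hA.partner_eq_self_iff p).2 hp]
  · have h := hA.adj_partner hp
    have hq : partner A p ≠ u := fun hq => hA.not_exists ⟨p, hq ▸ hA.symm h⟩
    exact hA.unique (hA.adj_partner hq) (hA.symm h)

theorem reachable [Finite V] (G : SimpleGraph V) {B : V → V → Prop} {w : V}
    (hA : IsNearPerfectMatching A u) (hB : IsNearPerfectMatching B w)
    (hAG : ∀ p q, A p q → G.Adj p q) (hBG : ∀ p q, B p q → G.Adj p q) :
    G.Reachable u w :=
  reachable_of_involutive G hA.partner_involutive hB.partner_involutive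
    (fun v hv => hAG _ _ (hA.adj_partner (mt (hA.partner_eq_self_iff v).2 hv)))
    (fun v hv => hBG _ _ (hB.adj_partner (mt (hB.partner_eq_self_iff v).2 hv)))
    hA.partner_eq_self_iff (fun v => (hB.partner_eq_self_iff v).1)

end IsNearPerfectMatching

end Matching

section Rows

/-- `j` is one of the `m` positions at the left end (if `Q`) or at the right end (if `¬ Q`)
of the row `1, …, b`. -/
def InEnd (Q : Prop) (b m j : ℕ) : Prop :=
  (Q ∧ 1 ≤ j ∧ j ≤ m) ∨ (¬ Q ∧ b + 1 ≤ j + m ∧ j ≤ b)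

variable {Q : Prop} {b m m' j : ℕ}

theorem InEnd.le (h : InEnd Q b m j) (hm : m ≤ b) : 1 ≤ j ∧ j ≤ b := by
  unfold InEnd at h
  omega

theorem not_inEnd_and_inEnd_not (hb : m + m' ≤ b) :
    ¬ (InEnd Q b m j ∧ InEnd (¬ Q) b m' j) := by
  by_cases hQ : Q <;> simp only [InEnd, hQ, not_true_eq_false, not_false_eq_true, true_and,
    false_and, false_or, or_false] <;> omega

theorem inEnd_or_inEnd_not (hj : 1 ≤ j) (hjb : j ≤ b) (hb : b ≤ m + m') :
    InEnd Q b m j ∨ InEnd (¬ Q) b m' j := by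
  by_cases hQ : Q <;> simp only [InEnd, hQ, not_true_eq_false, not_false_eq_true, true_and,
    false_and, false_or, or_false] <;> omega

theorem exists_forall_inEnd_or_inEnd_not_iff (hb : b = m + m' + 1) :
    ∃ g, 1 ≤ g ∧ g ≤ b ∧ ∀ j, 1 ≤ j → j ≤ b →
      (InEnd Q b m j ∨ InEnd (¬ Q) b m' j ↔ j ≠ g) := by
  by_cases hQ : Q
  · refine ⟨m + 1, by omega, by omega, fun j hj hjb => ?_⟩
    simp only [InEnd, hQ, not_true_eq_false, not_false_eq_true, true_and, false_and, false_or,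
      or_false]
    omega
  · refine ⟨m' + 1, by omega, by omega, fun j hj hjb => ?_⟩
    simp only [InEnd, hQ, not_true_eq_false, not_false_eq_true, true_and, false_and, false_or,
      or_false]
    omega

end Rows

instance (n : ℕ) (β : ℕ → ℕ) : Finite (UDVert n β) :=
  Set.Finite.to_subtype <|
    ((Set.finite_Iic n).prod (Set.finite_Iic ((range (n + 1)).sup β))).subset
      fun _ hp => ⟨hp.1, hp.2.2.trans (le_sup (mem_range.2 (Nat.lt_succ_of_le hp.1)))⟩

section AlternatingSum

variable {n : ℕ} {β r : ℕ → ℕ}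

theorem eq_add_one_of_alternating_sum (hr0 : r 0 = 0) (hrn : r (n + 1) = 0)
    (hradm : ∀ i ≤ n, r i + r (i + 1) ≤ β i)
    (halt : (∑ i ∈ range (n + 1), (-1 : ℤ) ^ i * (β i : ℤ)) = 1 ∨
      (∑ i ∈ range (n + 1), (-1 : ℤ) ^ i * (β i : ℤ)) = -1)
    {i₀ : ℕ} (hi₀ : i₀ ≤ n) (hfull : ∀ i ≤ n, i ≠ i₀ → r i + r (i + 1) = β i) :
    β i₀ = r i₀ + r (i₀ + 1) + 1 := by
  have htel : ∑ i ∈ range (n + 1), (-1 : ℤ) ^ i * ((r i : ℤ) + r (i + 1)) = 0 := by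
    calc _ = ∑ i ∈ range (n + 1), ((-1 : ℤ) ^ i * r i - (-1) ^ (i + 1) * r (i + 1)) :=
          sum_congr rfl fun i _ => by ring
      _ = 0 := by rw [sum_range_sub' (fun i => (-1 : ℤ) ^ i * r i)]; simp [hr0, hrn]
  have hsum : ∑ i ∈ range (n + 1), (-1 : ℤ) ^ i * (β i : ℤ) =
      (-1) ^ i₀ * ((β i₀ : ℤ) - r i₀ - r (i₀ + 1)) := by
    calc _ = ∑ i ∈ range (n + 1), (-1 : ℤ) ^ i * ((β i : ℤ) - r i - r (i + 1)) +
            ∑ i ∈ range (n + 1), (-1 : ℤ) ^ i * ((r i : ℤ) + r (i + 1)) := by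
          rw [← sum_add_distrib]; exact sum_congr rfl fun i _ => by ring
      _ = _ := by
        rw [htel, add_zero]
        refine sum_eq_single_of_mem i₀ (mem_range.2 (by omega)) fun i hi hne => ?_
        rw [← hfull i (Nat.lt_succ_iff.1 (mem_range.1 hi)) hne]
        push_cast
        ring
  have := hradm i₀ hi₀
  rw [hsum] at halt
  rcases neg_one_pow_eq_or ℤ i₀ with h | h <;> rw [h] at halt <;> omega

end AlternatingSum

section Aligned

def AlignedAdj (P : ℕ → Prop) (n : ℕ) (β r : ℕ → ℕ) (p q : ℕ × ℕ) : Prop :=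
  ∃ i j : ℕ, 1 ≤ i ∧ i ≤ n ∧ 1 ≤ j ∧ j ≤ r i ∧
    ((P i ∧ ((p = (i, j) ∧ q = (i - 1, j)) ∨ (q = (i, j) ∧ p = (i - 1, j)))) ∨
      (¬ P i ∧ ((p = (i, β i + 1 - j) ∧ q = (i - 1, β (i - 1) + 1 - j)) ∨
        (q = (i, β i + 1 - j) ∧ p = (i - 1, β (i - 1) + 1 - j)))))

def AlignedDown (P : ℕ → Prop) (n : ℕ) (β r : ℕ → ℕ) (p q : ℕ × ℕ) : Prop :=
  ∃ i j : ℕ, 1 ≤ i ∧ i ≤ n ∧ 1 ≤ j ∧ j ≤ r i ∧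
    ((P i ∧ p = (i, j) ∧ q = (i - 1, j)) ∨
      (¬ P i ∧ p = (i, β i + 1 - j) ∧ q = (i - 1, β (i - 1) + 1 - j)))

variable {P : ℕ → Prop} {n : ℕ} {β r : ℕ → ℕ} {p q : ℕ × ℕ}

theorem redAdj_eq_alignedAdj : RedAdj n β r = AlignedAdj (fun i => Even (n - i)) n β r := rfl

theorem blueAdj_eq_alignedAdj :
    BlueAdj n β r = AlignedAdj (fun i => ¬ Even (n - i)) n β r := by
  ext p q
  simp only [BlueAdj, AlignedAdj, not_not]

theorem alignedAdj_iff :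
    AlignedAdj P n β r p q ↔ AlignedDown P n β r p q ∨ AlignedDown P n β r q p := by
  constructor
  · rintro ⟨i, j, hi, hin, hj, hjr, ⟨hP, h | h⟩ | ⟨hP, h | h⟩⟩
    exacts [.inl ⟨i, j, hi, hin, hj, hjr, .inl ⟨hP, h⟩⟩,
      .inr ⟨i, j, hi, hin, hj, hjr, .inl ⟨hP, h⟩⟩,
      .inl ⟨i, j, hi, hin, hj, hjr, .inr ⟨hP, h⟩⟩,
      .inr ⟨i, j, hi, hin, hj, hjr, .inr ⟨hP, h⟩⟩]
  · rintro (⟨i, j, hi, hin, hj, hjr, ⟨hP, h⟩ | ⟨hP, h⟩⟩ |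
      ⟨i, j, hi, hin, hj, hjr, ⟨hP, h⟩ | ⟨hP, h⟩⟩)
    exacts [⟨i, j, hi, hin, hj, hjr, .inl ⟨hP, .inl h⟩⟩,
      ⟨i, j, hi, hin, hj, hjr, .inr ⟨hP, .inl h⟩⟩,
      ⟨i, j, hi, hin, hj, hjr, .inl ⟨hP, .inr h⟩⟩,
      ⟨i, j, hi, hin, hj, hjr, .inr ⟨hP, .inr h⟩⟩]

namespace AlignedDown

theorem fst_eq (h : AlignedDown P n β r p q) : p.1 = q.1 + 1 ∧ p.1 ≤ n := by
  obtain ⟨i, j, hi, hin, -, -, ⟨-, rfl, rfl⟩ | ⟨-, rfl, rfl⟩⟩ := h <;>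
    exact ⟨by omega, hin⟩

theorem inEnd_fst (hradm : ∀ i ≤ n, r i + r (i + 1) ≤ β i) (h : AlignedDown P n β r p q) :
    InEnd (P p.1) (β p.1) (r p.1) p.2 := by
  obtain ⟨i, j, -, hin, hj, hjr, ⟨hP, rfl, rfl⟩ | ⟨hP, rfl, rfl⟩⟩ := h
  · exact .inl ⟨hP, hj, hjr⟩
  · have := hradm i hin
    exact .inr ⟨hP, by dsimp only; omega, by dsimp only; omega⟩

theorem inEnd_snd (hP : ∀ i < n, (P (i + 1) ↔ ¬ P i))
    (hradm : ∀ i ≤ n, r i + r (i + 1) ≤ β i) (h : AlignedDown P n β r p q) :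
    InEnd (¬ P q.1) (β q.1) (r (q.1 + 1)) q.2 := by
  obtain ⟨i, j, hi, hin, hj, hjr, hc⟩ := h
  obtain ⟨k, rfl⟩ : ∃ k, i = k + 1 := ⟨i - 1, by omega⟩
  have hPk := hP k (by omega)
  have := hradm k (by omega)
  rw [Nat.add_sub_cancel] at hc
  obtain ⟨hP1, rfl, rfl⟩ | ⟨hP1, rfl, rfl⟩ := hc
  · exact .inl ⟨hPk.1 hP1, hj, hjr⟩
  · exact .inr ⟨fun h => hP1 (hPk.2 h), by dsimp only; omega, by dsimp only; omega⟩

theorem right_unique (hradm : ∀ i ≤ n, r i + r (i + 1) ≤ β i) {q' : ℕ × ℕ}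
    (h : AlignedDown P n β r p q) (h' : AlignedDown P n β r p q') : q = q' := by
  obtain ⟨i, j, -, hin, hj, hjr, ⟨hP, rfl, rfl⟩ | ⟨hP, rfl, rfl⟩⟩ := h <;>
  obtain ⟨i', j', -, -, hj', hjr', ⟨hP', hp, rfl⟩ | ⟨hP', hp, rfl⟩⟩ := h' <;>
  simp only [Prod.mk.injEq] at hp <;> obtain ⟨rfl, hp⟩ := hp
  · rw [hp]
  · exact absurd hP hP'
  · exact absurd hP' hP
  · have := hradm i hin
    rw [show j = j' by omega]

theorem left_unique (hradm : ∀ i ≤ n, r i + r (i + 1) ≤ β i) {p' : ℕ × ℕ}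
    (h : AlignedDown P n β r p q) (h' : AlignedDown P n β r p' q) : p = p' := by
  obtain ⟨i, j, hi, hin, hj, hjr, ⟨hP, rfl, rfl⟩ | ⟨hP, rfl, rfl⟩⟩ := h <;>
  obtain ⟨i', j', hi', -, hj', hjr', ⟨hP', rfl, hq⟩ | ⟨hP', rfl, hq⟩⟩ := h' <;>
  simp only [Prod.mk.injEq] at hq <;> obtain ⟨hii, hq⟩ := hq <;>
  obtain rfl : i = i' := by omega
  · rw [hq]
  · exact absurd hP hP'
  · exact absurd hP' hP
  · have := hradm (i - 1) (by omega)
    rw [Nat.sub_add_cancel hi] at this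
    rw [show j = j' by omega]

end AlignedDown

theorem exists_alignedDown_of_inEnd (hr0 : r 0 = 0) (hp : p.1 ≤ n)
    (h : InEnd (P p.1) (β p.1) (r p.1) p.2) : ∃ q, AlignedDown P n β r p q := by
  obtain ⟨i, j⟩ := p
  dsimp only at hp h
  have hi : 1 ≤ i := Nat.one_le_iff_ne_zero.2 fun hi => by
    subst hi; rw [hr0] at h; unfold InEnd at h; omega
  rcases h with ⟨hP, hj, hjr⟩ | ⟨hP, hjr, hj⟩
  · exact ⟨_, i, j, hi, hp, hj, hjr, .inl ⟨hP, rfl, rfl⟩⟩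
  · exact ⟨_, i, β i + 1 - j, hi, hp, by omega, by omega,
      .inr ⟨hP, Prod.ext rfl (by dsimp only; omega), rfl⟩⟩

theorem exists_alignedDown_of_inEnd_not (hP : ∀ i < n, (P (i + 1) ↔ ¬ P i))
    (hrn : r (n + 1) = 0) (hp : p.1 ≤ n) (h : InEnd (¬ P p.1) (β p.1) (r (p.1 + 1)) p.2) :
    ∃ q, AlignedDown P n β r q p := by
  obtain ⟨i, j⟩ := p
  dsimp only at hp h
  have hi : i < n := lt_of_le_of_ne hp fun hi => by
    subst hi; rw [hrn] at h; unfold InEnd at h; omega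
  have hPi := hP i hi
  rcases h with ⟨hP', hj, hjr⟩ | ⟨hP', hjr, hj⟩
  · exact ⟨_, i + 1, j, by omega, hi, hj, hjr,
      .inl ⟨hPi.2 hP', rfl, by rw [Nat.add_sub_cancel]⟩⟩
  · refine ⟨_, i + 1, β i + 1 - j, by omega, hi, by omega, by omega,
      .inr ⟨fun h => hP' (hPi.1 h), rfl, ?_⟩⟩
    rw [Nat.add_sub_cancel]
    exact Prod.ext rfl (by dsimp only; omega)

namespace AlignedAdj

theorem symm (h : AlignedAdj P n β r p q) : AlignedAdj P n β r q p :=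
  alignedAdj_iff.2 (alignedAdj_iff.1 h).symm

theorem ne (h : AlignedAdj P n β r p q) : p ≠ q := by
  rintro rfl
  rcases alignedAdj_iff.1 h with h | h <;> have := h.fst_eq <;> omega

theorem unique (hP : ∀ i < n, (P (i + 1) ↔ ¬ P i))
    (hradm : ∀ i ≤ n, r i + r (i + 1) ≤ β i)
    {q' : ℕ × ℕ} (h : AlignedAdj P n β r p q) (h' : AlignedAdj P n β r p q') : q = q' := by
  rcases alignedAdj_iff.1 h with h | h <;> rcases alignedAdj_iff.1 h' with h' | h'
  · exact h.right_unique hradm h'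
  · exact absurd ⟨h.inEnd_fst hradm, h'.inEnd_snd hP hradm⟩
      (not_inEnd_and_inEnd_not (hradm _ h.fst_eq.2))
  · exact absurd ⟨h'.inEnd_fst hradm, h.inEnd_snd hP hradm⟩
      (not_inEnd_and_inEnd_not (hradm _ h'.fst_eq.2))
  · exact h.left_unique hradm h'

theorem mem_snd (hP : ∀ i < n, (P (i + 1) ↔ ¬ P i))
    (hradm : ∀ i ≤ n, r i + r (i + 1) ≤ β i)
    (h : AlignedAdj P n β r p q) : q.1 ≤ n ∧ 1 ≤ q.2 ∧ q.2 ≤ β q.1 := by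
  rcases alignedAdj_iff.1 h with h | h <;> have hq := h.fst_eq
  · exact ⟨by omega, (h.inEnd_snd hP hradm).le (by have := hradm q.1 (by omega); omega)⟩
  · exact ⟨hq.2, (h.inEnd_fst hradm).le (by have := hradm q.1 hq.2; omega)⟩

end AlignedAdj

theorem exists_alignedAdj_iff (hP : ∀ i < n, (P (i + 1) ↔ ¬ P i)) (hr0 : r 0 = 0)
    (hrn : r (n + 1) = 0) (hradm : ∀ i ≤ n, r i + r (i + 1) ≤ β i) (hp : p.1 ≤ n) :
    (∃ q, AlignedAdj P n β r p q) ↔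
      InEnd (P p.1) (β p.1) (r p.1) p.2 ∨ InEnd (¬ P p.1) (β p.1) (r (p.1 + 1)) p.2 := by
  constructor
  · rintro ⟨q, h⟩
    exact (alignedAdj_iff.1 h).imp (·.inEnd_fst hradm) (·.inEnd_snd hP hradm)
  · rintro (h | h)
    · obtain ⟨q, hq⟩ := exists_alignedDown_of_inEnd hr0 hp h
      exact ⟨q, alignedAdj_iff.2 (.inl hq)⟩
    · obtain ⟨q, hq⟩ := exists_alignedDown_of_inEnd_not hP hrn hp h
      exact ⟨q, alignedAdj_iff.2 (.inr hq)⟩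

theorem exists_isNearPerfectMatching_alignedAdj (hP : ∀ i < n, (P (i + 1) ↔ ¬ P i))
    (hr0 : r 0 = 0) (hrn : r (n + 1) = 0) (hradm : ∀ i ≤ n, r i + r (i + 1) ≤ β i)
    (halt : (∑ i ∈ range (n + 1), (-1 : ℤ) ^ i * (β i : ℤ)) = 1 ∨
      (∑ i ∈ range (n + 1), (-1 : ℤ) ^ i * (β i : ℤ)) = -1)
    (hexc : ∃! i : ℕ, i ≤ n ∧ r i + r (i + 1) ≠ β i) :
    ∃ u : UDVert n β,
      IsNearPerfectMatching (fun p q : UDVert n β => AlignedAdj P n β r p.1 q.1) u := by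
  obtain ⟨i₀, ⟨hi₀, -⟩, hexc⟩ := hexc
  have hfull (i : ℕ) (hi : i ≤ n) (hne : i ≠ i₀) : r i + r (i + 1) = β i :=
    by_contra fun h => hne (hexc i ⟨hi, h⟩)
  obtain ⟨g, hg1, hg2, hg⟩ := exists_forall_inEnd_or_inEnd_not_iff (Q := P i₀)
    (eq_add_one_of_alternating_sum hr0 hrn hradm halt hi₀ hfull)
  refine ⟨⟨(i₀, g), hi₀, hg1, hg2⟩, fun h => h.symm, fun p h => h.ne rfl,
    fun h h' => Subtype.ext (h.unique hP hradm h'), fun ⟨(i, j), hi, hj1, hj2⟩ => ?_⟩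
  calc (∃ q : UDVert n β, AlignedAdj P n β r (i, j) q.1)
      ↔ ∃ q, AlignedAdj P n β r (i, j) q :=
        ⟨fun ⟨q, hq⟩ => ⟨q.1, hq⟩,
          fun ⟨q, hq⟩ => ⟨⟨q, hq.mem_snd hP hradm⟩, hq⟩⟩
    _ ↔ InEnd (P i) (β i) (r i) j ∨ InEnd (¬ P i) (β i) (r (i + 1)) j :=
        exists_alignedAdj_iff hP hr0 hrn hradm hi
    _ ↔ (i, j) ≠ (i₀, g) := by
        rcases eq_or_ne i i₀ with rfl | hne
        · simp only [hg j hj1 hj2, ne_eq, Prod.mk.injEq, true_and]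
        · simp only [ne_eq, Prod.mk.injEq, hne, false_and, not_false_eq_true, iff_true]
          exact inEnd_or_inEnd_not hj1 hj2 (hfull i hi hne).ge
    _ ↔ _ := not_congr ⟨fun h => Subtype.ext h, congrArg Subtype.val⟩

end Aligned

end UpDownGraph

open UpDownGraph in
theorem stmt9_general (n : ℕ) (β r s : ℕ → ℕ)
    (hr0 : r 0 = 0) (hrn : r (n + 1) = 0) (hs0 : s 0 = 0) (hsn : s (n + 1) = 0)
    (hradm : ∀ i ≤ n, r i + r (i + 1) ≤ β i)
    (hsadm : ∀ i ≤ n, s i + s (i + 1) ≤ β i)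
    (halt : (∑ i ∈ Finset.range (n + 1), (-1 : ℤ) ^ i * (β i : ℤ)) = 1 ∨
      (∑ i ∈ Finset.range (n + 1), (-1 : ℤ) ^ i * (β i : ℤ)) = -1)
    (hrexc : ∃! i : ℕ, i ≤ n ∧ r i + r (i + 1) ≠ β i)
    (hsexc : ∃! i : ℕ, i ≤ n ∧ s i + s (i + 1) ≠ β i) :
    ∃ pr pb : UDVert n β,
      (¬ ∃ q : UDVert n β, RedAdj n β r pr.1 q.1) ∧
      (∀ p : UDVert n β, (¬ ∃ q : UDVert n β, RedAdj n β r p.1 q.1) → p = pr) ∧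
      (¬ ∃ q : UDVert n β, BlueAdj n β s pb.1 q.1) ∧
      (∀ p : UDVert n β, (¬ ∃ q : UDVert n β, BlueAdj n β s p.1 q.1) → p = pb) ∧
      (∀ p : UDVert n β, p ≠ pr → ∃! q : UDVert n β, RedAdj n β r p.1 q.1) ∧
      (∀ p : UDVert n β, p ≠ pb → ∃! q : UDVert n β, BlueAdj n β s p.1 q.1) ∧
      (UDGraph n β r s).Reachable pr pb ∧
      (∃! C : (UDGraph n β r s).ConnectedComponent,
        ∃ p : UDVert n β, (UDGraph n β r s).connectedComponentMk p = C ∧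
          ((¬ ∃ q : UDVert n β, RedAdj n β r p.1 q.1) ∨
            (¬ ∃ q : UDVert n β, BlueAdj n β s p.1 q.1))) := by
  have hparity (i : ℕ) (hi : i < n) : Even (n - (i + 1)) ↔ ¬ Even (n - i) := by
    rw [show n - i = n - (i + 1) + 1 by omega, Nat.even_add_one, not_not]
  obtain ⟨pr, hred⟩ := exists_isNearPerfectMatching_alignedAdj (P := fun i => Even (n - i))
    hparity hr0 hrn hradm halt hrexc
  obtain ⟨pb, hblue⟩ := exists_isNearPerfectMatching_alignedAdj (P := fun i => ¬ Even (n - i))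
    (fun i hi => (hparity i hi).not) hs0 hsn hsadm halt hsexc
  rw [← redAdj_eq_alignedAdj] at hred
  rw [← blueAdj_eq_alignedAdj] at hblue
  have hreach : (UDGraph n β r s).Reachable pr pb :=
    hred.reachable _ hblue (fun p q h => ⟨fun e => hred.irrefl p (e ▸ h), .inl h⟩)
      (fun p q h => ⟨fun e => hblue.irrefl p (e ▸ h), .inr h⟩)
  refine ⟨pr, pb, hred.not_exists, fun _ => hred.eq_of_not_exists, hblue.not_exists,
    fun _ => hblue.eq_of_not_exists, fun _ => hred.existsUnique, fun _ => hblue.existsUnique,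
    hreach, ⟨_, ⟨pr, rfl, .inl hred.not_exists⟩, ?_⟩⟩
  rintro C ⟨p, rfl, hp | hp⟩
  · rw [hred.eq_of_not_exists hp]
  · rw [hblue.eq_of_not_exists hp]
    exact SimpleGraph.ConnectedComponent.sound hreach.symm

/-- For a string component `(β; r, s)`: the up-and-down graph has exactly one vertex
`pr` not incident to a red edge and exactly one vertex `pb` not incident to a blue edge;
every other vertex is incident to exactly one red resp. blue edge; `pr` and `pb` lie in
the same connected component; and exactly one connected component contains a vertex
missing an edge of one of the colors (so exactly one component is a string and all the
others are bands). -/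
theorem stmt9 (n : ℕ) (hn : 1 ≤ n) (β r s : ℕ → ℕ)
    (hr0 : r 0 = 0) (hrn : r (n + 1) = 0) (hs0 : s 0 = 0) (hsn : s (n + 1) = 0)
    (hradm : ∀ i ≤ n, r i + r (i + 1) ≤ β i)
    (hsadm : ∀ i ≤ n, s i + s (i + 1) ≤ β i)
    (halt : (∑ i ∈ Finset.range (n + 1), (-1 : ℤ) ^ i * (β i : ℤ)) = 1 ∨
      (∑ i ∈ Finset.range (n + 1), (-1 : ℤ) ^ i * (β i : ℤ)) = -1)
    (hrexc : ∃! i : ℕ, i ≤ n ∧ r i + r (i + 1) ≠ β i)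
    (hsexc : ∃! i : ℕ, i ≤ n ∧ s i + s (i + 1) ≠ β i) :
    ∃ pr pb : UDVert n β,
      (¬ ∃ q : UDVert n β, RedAdj n β r pr.1 q.1) ∧
      (∀ p : UDVert n β, (¬ ∃ q : UDVert n β, RedAdj n β r p.1 q.1) → p = pr) ∧
      (¬ ∃ q : UDVert n β, BlueAdj n β s pb.1 q.1) ∧
      (∀ p : UDVert n β, (¬ ∃ q : UDVert n β, BlueAdj n β s p.1 q.1) → p = pb) ∧
      (∀ p : UDVert n β, p ≠ pr → ∃! q : UDVert n β, RedAdj n β r p.1 q.1) ∧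
      (∀ p : UDVert n β, p ≠ pb → ∃! q : UDVert n β, BlueAdj n β s p.1 q.1) ∧
      (UDGraph n β r s).Reachable pr pb ∧
      (∃! C : (UDGraph n β r s).ConnectedComponent,
        ∃ p : UDVert n β, (UDGraph n β r s).connectedComponentMk p = C ∧
          ((¬ ∃ q : UDVert n β, RedAdj n β r p.1 q.1) ∨
            (¬ ∃ q : UDVert n β, BlueAdj n β s p.1 q.1))) :=
  stmt9_general n β r s hr0 hrn hs0 hsn hradm hsadm halt hrexc hsexc
end

section
/- Let K be a field of characteristic zero, n ≥ 2, S = K[A_1,…,A_n,B_1,…,B_n], and let Θ be a symmetric matching on Z(n−1) with orbits O_1,…,O_{n−1}. For each orbit O_j define an action of the multiplicative group Kˣ on S by K-algebra automorphisms scaling variables as follows: if O_j = {x_k, y_l}, then t ∈ Kˣ sends A_k ↦ tA_k, A_{k+1} ↦ tA_{k+1}, B_l ↦ t^{−1}B_l, B_{l+1} ↦ t^{−1}B_{l+1} and fixes all other variables; if O_j = {x_k, x_l} with k < l, then t sends A_k ↦ tA_k, A_{k+1} ↦ tA_{k+1}, A_l ↦ t^{−1}A_l, A_{l+1} ↦ t^{−1}A_{l+1}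 and fixes all other variables; if O_j = {y_k, y_l} with k < l, then t sends B_k ↦ tB_k, B_{k+1} ↦ tB_{k+1}, B_l ↦ t^{−1}B_l, B_{l+1} ↦ t^{−1}B_{l+1} and fixes all other variables (if a variable is affected twice within one orbit's action, the scalings are multiplied). These actions for j = 1,…,n−1 commute and define an action of the torus (Kˣ)^{n−1} on S. Then the ring of invariants S^{(Kˣ)^{n−1}} equals S(Θ). -/
open MvPolynomial

/-- The variable `A_i` (1-indexed `i`; here `i : Fin n` is the 0-indexed position). -/
noncomputable def Av (K : Type*) [Field K] (n : ℕ) (i : Fin n) :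
    MvPolynomial (Fin n ⊕ Fin n) K := X (Sum.inl i)

/-- The variable `B_i` (1-indexed `i`; here `i : Fin n` is the 0-indexed position). -/
noncomputable def Bv (K : Type*) [Field K] (n : ℕ) (i : Fin n) :
    MvPolynomial (Fin n ⊕ Fin n) K := X (Sum.inr i)

/-- The monomial `A_1^{u 1} ⋯ A_n^{u n} · B_1^{v 1} ⋯ B_n^{v n}` (1-indexed exponents). -/
noncomputable def monAB (K : Type*) [Field K] (n : ℕ) (u v : ℕ → ℕ) :
    MvPolynomial (Fin n ⊕ Fin n) K :=
  (∏ i : Fin n, X (Sum.inl i) ^ u ((i : ℕ) + 1)) *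
    ∏ i : Fin n, X (Sum.inr i) ^ v ((i : ℕ) + 1)

/-- The `K`-span of the monomials whose (1-indexed) exponent vectors satisfy the
control equations `E`; this is the ring `S(Θ)` when `E` is the system of control
equations of a matching `Θ`. -/
noncomputable def controlSpan (K : Type*) [Field K] (n : ℕ)
    (E : (ℕ → ℕ) → (ℕ → ℕ) → Prop) :
    Submodule K (MvPolynomial (Fin n ⊕ Fin n) K) :=
  Submodule.span K {p | ∃ u v : ℕ → ℕ, E u v ∧ p = monAB K n u v}

/-- The control equations of a symmetric matching `Θ` on
`Z(n-1) = {x_1,…,x_{n-1}, y_1,…,y_{n-1}}` (here `x_k ↔ Sum.inl ⟨k-1⟩`,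
`y_k ↔ Sum.inr ⟨k-1⟩`), on 1-indexed exponent vectors `u, v`. -/
def ctrlEq (n : ℕ) (Θ : Fin (n - 1) ⊕ Fin (n - 1) → Fin (n - 1) ⊕ Fin (n - 1))
    (u v : ℕ → ℕ) : Prop :=
  ∀ i j : Fin (n - 1),
    (Θ (Sum.inl i) = Sum.inr j →
      u ((i : ℕ) + 1) + u ((i : ℕ) + 2) = v ((j : ℕ) + 1) + v ((j : ℕ) + 2) ∧
      u ((j : ℕ) + 1) + u ((j : ℕ) + 2) = v ((i : ℕ) + 1) + v ((i : ℕ) + 2)) ∧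
    (Θ (Sum.inl i) = Sum.inl j →
      u ((i : ℕ) + 1) + u ((i : ℕ) + 2) = u ((j : ℕ) + 1) + u ((j : ℕ) + 2) ∧
      v ((i : ℕ) + 1) + v ((i : ℕ) + 2) = v ((j : ℕ) + 1) + v ((j : ℕ) + 2))

/-- The basic weight of `z ∈ Z(n-1)` on the variables: `x_k` (resp. `y_k`) scales
`A_k, A_{k+1}` (resp. `B_k, B_{k+1}`) by `t` (0-indexed: variables `k-1, k`). -/
def posWt (n : ℕ) (z : Fin (n - 1) ⊕ Fin (n - 1)) (w : Fin n ⊕ Fin n) : ℤ :=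
  match z, w with
  | Sum.inl k, Sum.inl a => if (a : ℕ) = (k : ℕ) ∨ (a : ℕ) = (k : ℕ) + 1 then 1 else 0
  | Sum.inr k, Sum.inr a => if (a : ℕ) = (k : ℕ) ∨ (a : ℕ) = (k : ℕ) + 1 then 1 else 0
  | _, _ => 0

/-- The weight with which the one-parameter subgroup attached to the orbit
`{z, Θ z}` of `Θ` scales a variable: the two variables next to `z` get weight `+1`
and the two variables next to `Θ z` get weight `-1`. -/
def wtTheta (n : ℕ) (Θ : Fin (n - 1) ⊕ Fin (n - 1) → Fin (n - 1) ⊕ Fin (n - 1))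
    (z : Fin (n - 1) ⊕ Fin (n - 1)) (w : Fin n ⊕ Fin n) : ℤ :=
  posWt n z w - posWt n (Θ z) w

/-! Each one-parameter subgroup acts diagonally on monomials, scaling the monomial with exponent
`d` by `t ^ ⟨m, d⟩` for its weight vector `m`. Over a field of characteristic zero `2 ∈ Kˣ` has
infinite order, so a polynomial is invariant exactly when every monomial in its support has weight
zero for every orbit. For the orbit `{z, Θ z}` the weight of `d` is the difference of the degrees
of `d` in the two variables next to `z` and in the two next to `Θ z`, and by the symmetry of `Θ`
the vanishing of all these differences is exactly the system of control equations. -/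

lemma Finset.prod_zpow_eq_zpow_sum {ι G : Type*} [CommGroup G] (s : Finset ι) (f : ι → ℤ)
    (a : G) : ∏ i ∈ s, a ^ f i = a ^ ∑ i ∈ s, f i := by
  induction s using Finset.cons_induction with
  | empty => simp
  | cons i s _ ih => rw [Finset.sum_cons, Finset.prod_cons, zpow_add, ih]

lemma Units.prod_val_zpow_pow {M ι : Type*} [CommMonoid M] [Fintype ι] (t : Mˣ) (m : ι → ℤ)
    (d : ι → ℕ) : ∏ i, ((t ^ m i : Mˣ) : M) ^ d i = ((t ^ ∑ i, m i * d i : Mˣ) : M) := by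
  simp_rw [← Units.val_pow_eq_pow_val, ← Units.coe_prod, ← zpow_natCast, ← zpow_mul,
    Finset.prod_zpow_eq_zpow_sum]

lemma eq_zero_of_two_zpow_eq_one {K : Type*} [DivisionRing K] [CharZero K] {k : ℤ}
    (h : (2 : K) ^ k = 1) : k = 0 := by
  have h' : (((2 : ℚ) ^ k : ℚ) : K) = ((1 : ℚ) : K) := by push_cast; exact h
  exact (zpow_eq_one_iff_right₀ (by norm_num) (by norm_num)).1 (Rat.cast_injective h')

namespace MvPolynomial

section DiagonalScaling

variable {R σ : Type*} [CommSemiring R] [Fintype σ]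

lemma aeval_smul_X_monomial (s : σ → R) (d : σ →₀ ℕ) (c : R) :
    aeval (fun w => s w • (X w : MvPolynomial σ R)) (monomial d c) =
      (∏ w, s w ^ d w) • monomial d c := by
  simp_rw [aeval_monomial, monomial_eq, Finsupp.prod_fintype _ _ (fun _ => pow_zero _), smul_pow,
    Finset.prod_smul, algebraMap_eq, mul_smul_comm]

lemma coeff_aeval_smul_X (s : σ → R) (p : MvPolynomial σ R) (d : σ →₀ ℕ) :
    coeff d (aeval (fun w => s w • (X w : MvPolynomial σ R)) p) = (∏ w, s w ^ d w) * coeff d p := by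
  induction p using MvPolynomial.induction_on' with
  | monomial e c =>
    classical
    rw [aeval_smul_X_monomial, coeff_smul, coeff_monomial, smul_eq_mul]
    split_ifs with h
    · rw [h]
    · simp
  | add p q hp hq => simp only [map_add, coeff_add, hp, hq, mul_add]

end DiagonalScaling

variable {K σ : Type*} [Field K] [Fintype σ]

theorem forall_aeval_zpow_smul_X_eq_self_iff [CharZero K] (m : σ → ℤ) (p : MvPolynomial σ K) :
    (∀ t : Kˣ, aeval (fun w => ((t ^ m w : Kˣ) : K) • (X w : MvPolynomial σ K)) p = p) ↔
      ∀ d ∈ p.support, ∑ w, m w * (d w : ℤ) = 0 := by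
  simp_rw [MvPolynomial.ext_iff, coeff_aeval_smul_X, Units.prod_val_zpow_pow]
  constructor
  · intro h d hd
    have hcoeff := h (Units.mk0 2 two_ne_zero) d
    rw [mul_eq_right₀ (mem_support_iff.mp hd), Units.val_zpow_eq_zpow_val, Units.val_mk0] at hcoeff
    exact eq_zero_of_two_zpow_eq_one hcoeff
  · intro h t d
    by_cases hd : d ∈ p.support
    · rw [h d hd, zpow_zero, Units.val_one, one_mul]
    · rw [notMem_support_iff.mp hd, mul_zero]

end MvPolynomial

section Matching

variable {n : ℕ}

def lowerVar : Fin (n - 1) ⊕ Fin (n - 1) → Fin n ⊕ Fin n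
  | Sum.inl k => Sum.inl ⟨k, by omega⟩
  | Sum.inr k => Sum.inr ⟨k, by omega⟩

def upperVar : Fin (n - 1) ⊕ Fin (n - 1) → Fin n ⊕ Fin n
  | Sum.inl k => Sum.inl ⟨k + 1, by omega⟩
  | Sum.inr k => Sum.inr ⟨k + 1, by omega⟩

lemma posWt_eq (z : Fin (n - 1) ⊕ Fin (n - 1)) (w : Fin n ⊕ Fin n) :
    posWt n z w = (if w = lowerVar z then 1 else 0) + (if w = upperVar z then 1 else 0) := by
  cases z <;> cases w <;> simp only [posWt, lowerVar, upperVar, Sum.inl.injEq, Sum.inr.injEq,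
    reduceCtorEq, Fin.ext_iff, if_false, add_zero] <;> grind

def pairDeg (d : (Fin n ⊕ Fin n) →₀ ℕ) (z : Fin (n - 1) ⊕ Fin (n - 1)) : ℕ :=
  d (lowerVar z) + d (upperVar z)

lemma sum_posWt_mul (z : Fin (n - 1) ⊕ Fin (n - 1)) (d : (Fin n ⊕ Fin n) →₀ ℕ) :
    ∑ w, posWt n z w * (d w : ℤ) = pairDeg d z := by
  simp [posWt_eq, add_mul, Finset.sum_add_distrib, pairDeg]

lemma sum_wtTheta_mul (Θ : Fin (n - 1) ⊕ Fin (n - 1) → Fin (n - 1) ⊕ Fin (n - 1))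
    (z : Fin (n - 1) ⊕ Fin (n - 1)) (d : (Fin n ⊕ Fin n) →₀ ℕ) :
    ∑ w, wtTheta n Θ z w * (d w : ℤ) = (pairDeg d z : ℤ) - pairDeg d (Θ z) := by
  simp only [wtTheta, sub_mul, Finset.sum_sub_distrib, sum_posWt_mul]

noncomputable def expVec (u v : ℕ → ℕ) : (Fin n ⊕ Fin n) →₀ ℕ :=
  Finsupp.equivFunOnFinite.symm (Sum.elim (fun i => u (i + 1)) (fun i => v (i + 1)))

@[simp] lemma pairDeg_expVec_inl (u v : ℕ → ℕ) (i : Fin (n - 1)) :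
    pairDeg (expVec u v) (Sum.inl i) = u (i + 1) + u (i + 2) := rfl

@[simp] lemma pairDeg_expVec_inr (u v : ℕ → ℕ) (i : Fin (n - 1)) :
    pairDeg (expVec u v) (Sum.inr i) = v (i + 1) + v (i + 2) := rfl

lemma monAB_eq_monomial (K : Type*) [Field K] (u v : ℕ → ℕ) :
    monAB K n u v = monomial (expVec u v) 1 := by
  rw [monomial_eq, map_one, one_mul, Finsupp.prod_fintype _ _ (fun _ => pow_zero _),
    Fintype.prod_sum_type]
  rfl

lemma exists_expVec_eq (d : (Fin n ⊕ Fin n) →₀ ℕ) : ∃ u v : ℕ → ℕ, expVec u v = d := by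
  refine ⟨fun m => if h : m - 1 < n then d (Sum.inl ⟨m - 1, h⟩) else 0,
    fun m => if h : m - 1 < n then d (Sum.inr ⟨m - 1, h⟩) else 0, ?_⟩
  ext (i | i) <;> simp [expVec]

lemma ctrlEq_iff (Θ : Fin (n - 1) ⊕ Fin (n - 1) → Fin (n - 1) ⊕ Fin (n - 1))
    (hsym : ∀ i j : Fin (n - 1),
      (Θ (Sum.inl i) = Sum.inl j ↔ Θ (Sum.inr i) = Sum.inr j) ∧
      (Θ (Sum.inl i) = Sum.inr j ↔ Θ (Sum.inr i) = Sum.inl j))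
    (u v : ℕ → ℕ) :
    ctrlEq n Θ u v ↔ ∀ z, pairDeg (expVec u v) z = pairDeg (expVec u v) (Θ z) := by
  constructor
  · intro hC z
    rcases z with i | i <;> rcases hΘ : Θ _ with j | j
    · simpa using ((hC i j).2 hΘ).1
    · simpa using ((hC i j).1 hΘ).1
    · simpa using ((hC i j).1 ((hsym i j).2.mpr hΘ)).2.symm
    · simpa using ((hC i j).2 ((hsym i j).1.mpr hΘ)).2
  · intro hP i j
    refine ⟨fun hΘ => ⟨?_, ?_⟩, fun hΘ => ⟨?_, ?_⟩⟩
    · simpa [hΘ] using hP (Sum.inl i)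
    · simpa [(hsym i j).2.mp hΘ] using (hP (Sum.inr i)).symm
    · simpa [hΘ] using hP (Sum.inl i)
    · simpa [(hsym i j).1.mp hΘ] using hP (Sum.inr i)

lemma controlSpan_ctrlEq_eq_restrictSupport (K : Type*) [Field K]
    (Θ : Fin (n - 1) ⊕ Fin (n - 1) → Fin (n - 1) ⊕ Fin (n - 1))
    (hsym : ∀ i j : Fin (n - 1),
      (Θ (Sum.inl i) = Sum.inl j ↔ Θ (Sum.inr i) = Sum.inr j) ∧
      (Θ (Sum.inl i) = Sum.inr j ↔ Θ (Sum.inr i) = Sum.inl j)) :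
    controlSpan K n (ctrlEq n Θ) =
      restrictSupport K {d | ∀ z, pairDeg d z = pairDeg d (Θ z)} := by
  rw [controlSpan, restrictSupport_eq_span]
  congr 1
  ext p
  constructor
  · rintro ⟨u, v, hC, rfl⟩
    exact ⟨expVec u v, (ctrlEq_iff Θ hsym u v).1 hC, (monAB_eq_monomial K u v).symm⟩
  · rintro ⟨d, hd, rfl⟩
    obtain ⟨u, v, rfl⟩ := exists_expVec_eq d
    exact ⟨u, v, (ctrlEq_iff Θ hsym u v).2 hd, (monAB_eq_monomial K u v).symm⟩

end Matching

theorem stmt10_general (K : Type*) [Field K] [CharZero K] (n : ℕ)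
    (Θ : Fin (n - 1) ⊕ Fin (n - 1) → Fin (n - 1) ⊕ Fin (n - 1))
    (hsym : ∀ i j : Fin (n - 1),
      (Θ (Sum.inl i) = Sum.inl j ↔ Θ (Sum.inr i) = Sum.inr j) ∧
      (Θ (Sum.inl i) = Sum.inr j ↔ Θ (Sum.inr i) = Sum.inl j)) :
    {p : MvPolynomial (Fin n ⊕ Fin n) K |
        ∀ (z : Fin (n - 1) ⊕ Fin (n - 1)) (t : Kˣ),
          aeval (R := K)
            (fun w : Fin n ⊕ Fin n =>
              ((t ^ wtTheta n Θ z w : Kˣ) : K) • (X w : MvPolynomial (Fin n ⊕ Fin n) K))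
            p = p} =
      ↑(controlSpan K n (ctrlEq n Θ)) := by
  rw [controlSpan_ctrlEq_eq_restrictSupport K Θ hsym]
  ext p
  refine (forall_congr' fun z => forall_aeval_zpow_smul_X_eq_self_iff (wtTheta n Θ z) p).trans ?_
  simp_rw [sum_wtTheta_mul, sub_eq_zero, Nat.cast_inj]
  exact ⟨fun h d hd z => h z d hd, fun h z d hd => h hd z⟩

/-- Let `K` be a field of characteristic zero and `Θ` a symmetric matching on
`Z(n-1)`. The subring of polynomials invariant under the torus `(Kˣ)^{n-1}` acting
through the orbits of `Θ` (each orbit `{z, Θ z}` acting by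
`X_w ↦ t^{wt z w} • X_w`) equals the matching ring `S(Θ)`. -/
theorem stmt10 (K : Type*) [Field K] [CharZero K] (n : ℕ) (hn : 2 ≤ n)
    (Θ : Fin (n - 1) ⊕ Fin (n - 1) → Fin (n - 1) ⊕ Fin (n - 1))
    (hinv : Function.Involutive Θ) (hnf : ∀ z, Θ z ≠ z)
    (hsym : ∀ i j : Fin (n - 1),
      (Θ (Sum.inl i) = Sum.inl j ↔ Θ (Sum.inr i) = Sum.inr j) ∧
      (Θ (Sum.inl i) = Sum.inr j ↔ Θ (Sum.inr i) = Sum.inl j)) :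
    {p : MvPolynomial (Fin n ⊕ Fin n) K |
        ∀ (z : Fin (n - 1) ⊕ Fin (n - 1)) (t : Kˣ),
          aeval (R := K)
            (fun w : Fin n ⊕ Fin n =>
              ((t ^ wtTheta n Θ z w : Kˣ) : K) • (X w : MvPolynomial (Fin n ⊕ Fin n) K))
            p = p} =
      ↑(controlSpan K n (ctrlEq n Θ)) :=
  stmt10_general K n Θ hsym
end
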